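/- arXiv:1009.1462 — 6 statements merged into one kernel-verified Lean document; each statement's English description precedes it below -/
import Mathlib

section
/- Let T be a finite abelian group and β : T × T → F^× a nondegenerate alternating bicharacter (multiplicative in each variable, β(t,t) = 1 for all t, and β(u,T) = 1 implies u = e). Then T is isomorphic to H × H for some finite abelian group H; in particular |T| is a perfect square. -/
/-!
View the bicharacter as `B : T →* T →* Fˣ`; nondegeneracy says `B` is injective. Pick `x` of order
`exp T`. Then `B x` has the same order, and since finite subgroups of `Fˣ` are cyclic its image is
generated by some `B x y`, a primitive `exp T`-th root of unity. Every value of `B` is then a power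
of `B x y`, which splits `T` as `⟨x⟩ × ⟨y⟩ × K` with `K` the orthogonal of `{x, y}`. Both cyclic
factors have order `exp T`, and `B` restricts to a nondegenerate alternating form on the smaller
group `K`, so induction on `|T|` applies.
-/

open Subgroup Function

namespace MonoidHom

section

variable {T M : Type*} [CommGroup T] [CommGroup M]

theorem orderOf_eq_orderOf_apply_of_forall_mem_zpowers {f : T →* M} {y : T}
    (h : ∀ t, f t ∈ zpowers (f y)) : orderOf f = orderOf (f y) := by
  refine orderOf_eq_orderOf_iff.mpr fun n => ⟨fun hn => by rw [← pow_apply, hn, one_apply], ?_⟩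
  intro hn
  ext t
  obtain ⟨k, hk⟩ := h t
  rw [pow_apply, one_apply, ← hk, ← zpow_natCast, ← zpow_mul, mul_comm, zpow_mul, zpow_natCast,
    hn, one_zpow]

theorem eq_one_of_mem_zpowers_of_map_eq_one {f : T →* M} {y q : T}
    (hy : orderOf (f y) = orderOf y) (hq : q ∈ zpowers y) (hfq : f q = 1) : q = 1 := by
  obtain ⟨b, rfl⟩ := hq
  rw [map_zpow, ← orderOf_dvd_iff_zpow_eq_one, hy] at hfq
  exact orderOf_dvd_iff_zpow_eq_one.mp hfq

variable (B : T →* T →* M)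

theorem apply_swap_of_alternating (halt : ∀ t, B t t = 1) (u v : T) : B v u = (B u v)⁻¹ := by
  have h := halt (u * v)
  simp only [map_mul, mul_apply, halt, one_mul, mul_one] at h
  exact eq_inv_of_mul_eq_one_left h

theorem orderOf_apply_eq_orderOf_of_isPrimitiveRoot {u v : T}
    (h : IsPrimitiveRoot (B u v) (Monoid.exponent T)) : orderOf (B u v) = orderOf v :=
  (orderOf_map_dvd (B u) v).antisymm (h.eq_orderOf ▸ Monoid.order_dvd_exponent v)

def orthogonalPair (x y : T) : Subgroup T := (B x).ker ⊓ (B y).ker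

@[simp]
theorem mem_orthogonalPair {x y k : T} : k ∈ B.orthogonalPair x y ↔ B x k = 1 ∧ B y k = 1 :=
  Iff.rfl

def splitting (x y : T) : zpowers x × zpowers y × B.orthogonalPair x y →* T :=
  (zpowers x).subtype.coprod ((zpowers y).subtype.coprod (B.orthogonalPair x y).subtype)

theorem splitting_apply {x y : T} (p : zpowers x × zpowers y × B.orthogonalPair x y) :
    B.splitting x y p = p.1 * (p.2.1 * p.2.2) :=
  rfl

variable {B} {x y : T}

theorem splitting_injective (halt : ∀ t, B t t = 1) (hx : orderOf (B y x) = orderOf x)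
    (hy : orderOf (B x y) = orderOf y) : Injective (B.splitting x y) := by
  rw [injective_iff_map_eq_one]
  rintro ⟨⟨p, hp⟩, ⟨q, hq⟩, ⟨k, hk⟩⟩ h
  rw [splitting_apply] at h
  obtain ⟨hxk, hyk⟩ := B.mem_orthogonalPair.mp hk
  have hBp : B x p = 1 := (zpowers_le (H := (B x).ker)).mpr (halt x) hp
  have hBq : B y q = 1 := (zpowers_le (H := (B y).ker)).mpr (halt y) hq
  have hq1 : q = 1 :=
    eq_one_of_mem_zpowers_of_map_eq_one hy hq <| by
      simpa [hBp, hxk] using congr(B x $h)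
  have hp1 : p = 1 :=
    eq_one_of_mem_zpowers_of_map_eq_one hx hp <| by
      simpa [hBq, hyk] using congr(B y $h)
  subst hp1 hq1
  rw [one_mul, one_mul] at h
  subst h
  rfl

theorem splitting_surjective (halt : ∀ t, B t t = 1) (hxv : ∀ t, B x t ∈ zpowers (B x y))
    (hyv : ∀ t, B y t ∈ zpowers (B y x)) : Surjective (B.splitting x y) := by
  intro t
  obtain ⟨b, hb⟩ := hxv t
  obtain ⟨a, ha⟩ := hyv t
  have hk : t / (x ^ a * y ^ b) ∈ B.orthogonalPair x y := by
    simp [halt, ← ha, ← hb]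
  refine ⟨(⟨x ^ a, a, rfl⟩, ⟨y ^ b, b, rfl⟩, ⟨_, hk⟩), ?_⟩
  rw [splitting_apply, ← mul_assoc]
  exact mul_div_cancel _ _

theorem injective_restrict_orthogonalPair (hB : Injective B) (halt : ∀ t, B t t = 1)
    (hsurj : Surjective (B.splitting x y)) :
    Injective ((B.compl₂ (B.orthogonalPair x y).subtype).comp (B.orthogonalPair x y).subtype) := by
  rw [injective_iff_map_eq_one]
  rintro ⟨k, hk⟩ hk1
  obtain ⟨hxk, hyk⟩ := B.mem_orthogonalPair.mp hk
  have hkx : B k x = 1 := by rw [apply_swap_of_alternating B halt, hxk, inv_one]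
  have hky : B k y = 1 := by rw [apply_swap_of_alternating B halt, hyk, inv_one]
  suffices B k = 1 from Subtype.ext (hB (this.trans (map_one B).symm))
  ext t
  obtain ⟨⟨⟨p, hp⟩, ⟨q, hq⟩, k'⟩, rfl⟩ := hsurj t
  have hkp : B k p = 1 := (zpowers_le (H := (B k).ker)).mpr hkx hp
  have hkq : B k q = 1 := (zpowers_le (H := (B k).ker)).mpr hky hq
  have hkk' : B k k' = 1 := DFunLike.congr_fun hk1 k'
  rw [splitting_apply, map_mul, map_mul, hkp, hkq, hkk', one_mul, one_mul, one_apply]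

end

section Units

variable {R : Type*} [CommRing R] [IsDomain R]

theorem exists_isPrimitiveRoot_apply {T : Type*} [CommGroup T] [Finite T] (B : T →* T →* Rˣ)
    (hB : Injective B) : ∃ x y, IsPrimitiveRoot (B x y) (Monoid.exponent T) := by
  obtain ⟨x, hx⟩ : ∃ x : T, orderOf x = Monoid.exponent T :=
    Monoid.exists_orderOf_eq_exponent Monoid.ExponentExists.of_finite
  have : Finite (B x).range := Finite.of_surjective _ (B x).rangeRestrict_surjective
  obtain ⟨⟨_, y, rfl⟩, hy⟩ := IsCyclic.exists_generator (α := (B x).range)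
  have hgen : ∀ t, B x t ∈ zpowers (B x y) := fun t => by
    obtain ⟨k, hk⟩ := hy ⟨B x t, t, rfl⟩
    exact ⟨k, congr_arg Subtype.val hk⟩
  refine ⟨x, y, ?_⟩
  rw [← hx, ← orderOf_injective B hB, orderOf_eq_orderOf_apply_of_forall_mem_zpowers hgen]
  exact IsPrimitiveRoot.orderOf _

theorem apply_mem_zpowers_of_isPrimitiveRoot {T : Type*} [CommGroup T] [Finite T]
    (B : T →* T →* Rˣ) {ζ : Rˣ} (hζ : IsPrimitiveRoot ζ (Monoid.exponent T)) (u v : T) :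
    B u v ∈ zpowers ζ := by
  have : NeZero (Monoid.exponent T) := ⟨Monoid.exponent_ne_zero_of_finite⟩
  rw [hζ.zpowers_eq, mem_rootsOfUnity, ← map_pow, Monoid.pow_exponent_eq_one, map_one]

theorem exists_mulEquiv_prod_self_of_alternating {T : Type*} [CommGroup T] [Finite T]
    (B : T →* T →* Rˣ) (hB : Injective B) (halt : ∀ t, B t t = 1) :
    ∃ (H : Type) (_ : CommGroup H) (_ : Finite H), Nonempty (T ≃* H × H) := by
  induction h : Nat.card T using Nat.strong_induction_on generalizing T with
  | _ n ih =>
  subst h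
  rcases subsingleton_or_nontrivial T with hT | hT
  · have : Unique T := uniqueOfSubsingleton 1
    exact ⟨Unit, inferInstance, inferInstance, ⟨MulEquiv.ofUnique.trans MulEquiv.prodUnique.symm⟩⟩
  obtain ⟨x, y, hxy⟩ := exists_isPrimitiveRoot_apply B hB
  have hyx : IsPrimitiveRoot (B y x) (Monoid.exponent T) := by
    rw [apply_swap_of_alternating B halt]
    exact hxy.inv
  have hsurj := splitting_surjective halt (apply_mem_zpowers_of_isPrimitiveRoot B hxy x)
    (apply_mem_zpowers_of_isPrimitiveRoot B hyx y)
  have hx := B.orderOf_apply_eq_orderOf_of_isPrimitiveRoot hyx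
  have hy := B.orderOf_apply_eq_orderOf_of_isPrimitiveRoot hxy
  let e := MulEquiv.ofBijective _ ⟨splitting_injective halt hx hy, hsurj⟩
  have hcard : Nat.card (B.orthogonalPair x y) < Nat.card T := by
    have h1 : 1 < orderOf x := by
      rw [← hx, ← hyx.eq_orderOf]
      exact Monoid.one_lt_exponent
    rw [← Nat.card_congr e.toEquiv, Nat.card_prod, Nat.card_prod, Nat.card_zpowers,
      Nat.card_zpowers]
    have : 0 < Nat.card (B.orthogonalPair x y) := Nat.card_pos
    nlinarith [Nat.mul_le_mul_right (Nat.card (B.orthogonalPair x y)) (orderOf_pos y)]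
  obtain ⟨H, _, _, ⟨eK⟩⟩ := ih _ hcard _ (injective_restrict_orthogonalPair hB halt hsurj)
    (fun k => halt k) rfl
  let cx : Multiplicative (ZMod (Nat.card (zpowers x))) ≃* zpowers x :=
    zmodCyclicMulEquiv inferInstance
  let cy : zpowers y ≃* zpowers x := mulEquivOfCyclicCardEq <| by
    rw [Nat.card_zpowers, Nat.card_zpowers, ← hx, ← hy, ← hxy.eq_orderOf, ← hyx.eq_orderOf]
  exact ⟨_ × H, inferInstance, inferInstance, ⟨e.symm.trans <|
    (cx.symm.prodCongr ((cy.trans cx.symm).prodCongr eK)).trans <|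
      MulEquiv.prodAssoc.symm.trans (MulEquiv.prodProdProdComm _ _ _ _)⟩⟩

end Units

end MonoidHom

/-- A finite abelian group admitting a nondegenerate alternating bicharacter with values
in `Fˣ` is isomorphic to `H × H` for some finite abelian group `H`; in particular its
order is a perfect square. -/
theorem group_with_nondeg_alternating_bicharacter_is_square
    {F : Type*} [Field F] {T : Type*} [CommGroup T] [Fintype T]
    (β : T → T → Fˣ)
    (hmul_left : ∀ t u v : T, β (u * v) t = β u t * β v t)
    (hmul_right : ∀ t u v : T, β t (u * v) = β t u * β t v)
    (halt : ∀ t : T, β t t = 1)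
    (hnondeg : ∀ u : T, (∀ t : T, β u t = 1) → u = 1) :
    ∃ (H : Type) (_ : CommGroup H) (_ : Fintype H),
      Nonempty (T ≃* H × H) ∧ ∃ m : ℕ, Fintype.card T = m ^ 2 := by
  let B : T →* T →* Fˣ := MonoidHom.mk' (fun u => MonoidHom.mk' (β u) (hmul_right u))
    fun u v => MonoidHom.ext fun t => hmul_left t u v
  have hB : Injective B := (injective_iff_map_eq_one B).mpr fun u hu =>
    hnondeg u fun t => DFunLike.congr_fun hu t
  obtain ⟨H, _, _, ⟨e⟩⟩ := B.exists_mulEquiv_prod_self_of_alternating hB halt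
  have : Fintype H := Fintype.ofFinite H
  refine ⟨H, inferInstance, this, ⟨e⟩, Fintype.card H, ?_⟩
  rw [Fintype.card_congr e.toEquiv, Fintype.card_prod, sq]
end

section
/- Let ε be a primitive ℓ-th root of unity in F and let X, Y be the generalized Pauli matrices in M_ℓ(F). Then the matrices X^i Y^j for 0 ≤ i, j < ℓ form a basis of M_ℓ(F) as an F-vector space, and each X^i Y^j is invertible. Consequently M_ℓ(F) = ⊕_{(i,j) ∈ Z_ℓ × Z_ℓ} F·X^i Y^j is a (Z_ℓ × Z_ℓ)-graded division algebra. -/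
/-!
`X` and `Y` both have order `ℓ` and satisfy `YX = ε^(ℓ-1) XY = ε⁻¹ XY`, so a product of two
monomials `XⁱYʲ` is a scalar multiple of the monomial whose exponents are the sums, reduced
mod `ℓ`; since each monomial is invertible, so is every nonzero homogeneous element. The only
nonzero entries of `XⁱYʲ` are `(ε^(ℓ-1-a))ⁱ` at positions `(a, a + j)`, so a linear relation
among the `ℓ²` monomials splits into `ℓ` Vandermonde systems with the distinct nodes
`ε^(ℓ-1-a)`; hence the monomials are linearly independent, and a basis by counting dimensions.
-/

/-- The generalized Pauli matrix `X = diag(ε^{ℓ-1}, …, ε, 1)`. -/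
def pauliX (F : Type*) [Field F] (ℓ : ℕ) (ε : F) : Matrix (Fin ℓ) (Fin ℓ) F :=
  Matrix.diagonal fun i => ε ^ (ℓ - 1 - (i : ℕ))

/-- The generalized Pauli matrix `Y`, the cyclic permutation matrix. -/
def pauliY (F : Type*) [Field F] (ℓ : ℕ) : Matrix (Fin ℓ) (Fin ℓ) F :=
  Matrix.of fun i j => if (j : ℕ) = ((i : ℕ) + 1) % ℓ then 1 else 0

/-- The `(ℤ/ℓ × ℤ/ℓ)`-grading of `M_ℓ(F)` whose component of degree `(i,j)` is
`F · XⁱYʲ`. -/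
def pauliGrading (F : Type*) [Field F] (ℓ : ℕ) (ε : F) :
    ZMod ℓ × ZMod ℓ → Submodule F (Matrix (Fin ℓ) (Fin ℓ) F) :=
  fun g => Submodule.span F {pauliX F ℓ ε ^ (g.1.val) * pauliY F ℓ ^ (g.2.val)}

section SkewCommuting

variable {R A : Type*} [CommMonoid R] [Monoid A] [MulAction R A] [IsScalarTower R A A]
  [SMulCommClass R A A] {x y : A} {c : R}

theorem pow_mul_of_mul_eq_smul (h : y * x = c • (x * y)) (n : ℕ) :
    y ^ n * x = c ^ n • (x * y ^ n) := by
  induction n with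
  | zero => simp
  | succ n ih =>
    calc y ^ (n + 1) * x = y ^ n * (y * x) := by rw [pow_succ, mul_assoc]
      _ = c • ((y ^ n * x) * y) := by rw [h, mul_smul_comm, mul_assoc]
      _ = c ^ (n + 1) • (x * y ^ (n + 1)) := by
        rw [ih, smul_mul_assoc, smul_smul, ← pow_succ', mul_assoc, ← pow_succ]

theorem pow_mul_pow_of_mul_eq_smul (h : y * x = c • (x * y)) (n m : ℕ) :
    y ^ n * x ^ m = c ^ (n * m) • (x ^ m * y ^ n) := by
  induction m with
  | zero => simp
  | succ m ih =>
    calc y ^ n * x ^ (m + 1) = (y ^ n * x ^ m) * x := by rw [pow_succ, mul_assoc]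
      _ = c ^ (n * m) • (x ^ m * (y ^ n * x)) := by rw [ih, smul_mul_assoc, mul_assoc]
      _ = c ^ (n * (m + 1)) • (x ^ (m + 1) * y ^ n) := by
        rw [pow_mul_of_mul_eq_smul h, mul_smul_comm, smul_smul, ← pow_add, ← mul_assoc,
          ← pow_succ, mul_add_one]

theorem pow_mul_pow_mul_pow_mul_pow_of_mul_eq_smul (h : y * x = c • (x * y)) (p q r s : ℕ) :
    (x ^ p * y ^ q) * (x ^ r * y ^ s) = c ^ (q * r) • (x ^ (p + r) * y ^ (q + s)) := by
  rw [mul_assoc, ← mul_assoc (y ^ q), pow_mul_pow_of_mul_eq_smul h, smul_mul_assoc,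
    mul_smul_comm, ← mul_assoc, ← mul_assoc, ← pow_add, mul_assoc, ← pow_add]

end SkewCommuting

theorem IsUnit.of_mem_span_singleton {K A : Type*} [Field K] [Ring A] [Algebra K A] {u x : A}
    (hu : IsUnit u) (hx : x ∈ K ∙ u) (hx0 : x ≠ 0) : IsUnit x := by
  obtain ⟨c, rfl⟩ := Submodule.mem_span_singleton.mp hx
  have hc : c ≠ 0 := by rintro rfl; exact hx0 (zero_smul K u)
  exact hu.smul (Units.mk0 c hc)

section Pauli

variable {F : Type*} [Field F] {ℓ : ℕ} {ε : F}

open Fin.NatCast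

theorem pauliY_apply [NeZero ℓ] (a b : Fin ℓ) :
    pauliY F ℓ a b = if b = a + 1 then 1 else 0 := by
  simp only [pauliY, Matrix.of_apply, Fin.ext_iff, Fin.val_add, Fin.val_one', Nat.add_mod_mod]

theorem pauliY_pow_apply [NeZero ℓ] (j : ℕ) (a b : Fin ℓ) :
    (pauliY F ℓ ^ j) a b = if b = a + j then 1 else 0 := by
  induction j generalizing b with
  | zero => simp [Matrix.one_apply, eq_comm]
  | succ j ih =>
    simp only [pow_succ, Matrix.mul_apply, ih, pauliY_apply, ite_mul, one_mul, zero_mul,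
      Finset.sum_ite_eq', Finset.mem_univ, if_true, Nat.cast_succ, add_assoc]

theorem pauliX_pow_mul_pauliY_pow_apply [NeZero ℓ] (i j : ℕ) (a b : Fin ℓ) :
    (pauliX F ℓ ε ^ i * pauliY F ℓ ^ j) a b =
      if b = a + j then (ε ^ (ℓ - 1 - (a : ℕ))) ^ i else 0 := by
  simp [pauliX, Matrix.diagonal_pow, Matrix.diagonal_mul, pauliY_pow_apply]

theorem pauliX_pow_card (hε : ε ^ ℓ = 1) : pauliX F ℓ ε ^ ℓ = 1 := by
  simp only [pauliX, Matrix.diagonal_pow, ← Matrix.diagonal_one]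
  congr 1
  funext a
  rw [Pi.pow_apply, ← pow_mul, mul_comm, pow_mul, hε, one_pow]

theorem pauliY_pow_card [NeZero ℓ] : pauliY F ℓ ^ ℓ = 1 := by
  ext a b
  simp [pauliY_pow_apply, Matrix.one_apply, eq_comm]

theorem pauliY_mul_pauliX (hε : ε ^ ℓ = 1) :
    pauliY F ℓ * pauliX F ℓ ε = ε ^ (ℓ - 1) • (pauliX F ℓ ε * pauliY F ℓ) := by
  ext a b
  simp only [pauliX, pauliY, Matrix.mul_diagonal, Matrix.diagonal_mul, Matrix.smul_apply,
    Matrix.of_apply, smul_eq_mul, ite_mul, mul_ite, one_mul, mul_one, zero_mul, mul_zero]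
  split_ifs with hb
  · rw [← pow_add]
    rcases (show (a : ℕ) + 1 ≤ ℓ from a.isLt).lt_or_eq with ha | ha
    · rw [hb, Nat.mod_eq_of_lt ha,
        show ℓ - 1 + (ℓ - 1 - a) = ℓ - 1 - (a + 1) + ℓ by omega, pow_add, hε, mul_one]
    · rw [hb, ha, Nat.mod_self, show ℓ - 1 + (ℓ - 1 - a) = ℓ - 1 by omega, Nat.sub_zero]
  · rfl

theorem linearIndependent_pauliX_pow_mul_pauliY_pow [NeZero ℓ] (hε : IsPrimitiveRoot ε ℓ) :
    LinearIndependent F fun p : Fin ℓ × Fin ℓ =>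
      pauliX F ℓ ε ^ (p.1 : ℕ) * pauliY F ℓ ^ (p.2 : ℕ) := by
  rw [Fintype.linearIndependent_iff]
  rintro c hc ⟨i, j⟩
  have hinj : Function.Injective fun a : Fin ℓ => ε ^ (ℓ - 1 - (a : ℕ)) := fun a b hab =>
    Fin.ext (by have := hε.pow_inj (by omega) (by omega) hab; omega)
  have hcol (a : Fin ℓ) : ∑ i : Fin ℓ, c (i, j) * (ε ^ (ℓ - 1 - (a : ℕ))) ^ (i : ℕ) = 0 := by
    simpa [Matrix.sum_apply, pauliX_pow_mul_pauliY_pow_apply, Fintype.sum_prod_type_right]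
      using congrFun (congrFun hc a) (a + j)
  exact congrFun (Matrix.eq_zero_of_forall_index_sum_mul_pow_eq_zero hinj hcol) i

theorem pauliX_pow_mul_pauliY_pow_mod [NeZero ℓ] (hε : ε ^ ℓ = 1) (i j : ℕ) :
    pauliX F ℓ ε ^ (i % ℓ) * pauliY F ℓ ^ (j % ℓ) = pauliX F ℓ ε ^ i * pauliY F ℓ ^ j := by
  rw [← pow_eq_pow_mod i (pauliX_pow_card hε), ← pow_eq_pow_mod j pauliY_pow_card]

theorem isUnit_pauliX_pow_mul_pauliY_pow [NeZero ℓ] (hε : ε ^ ℓ = 1) (i j : ℕ) :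
    IsUnit (pauliX F ℓ ε ^ i * pauliY F ℓ ^ j) :=
  ((IsUnit.of_pow_eq_one (pauliX_pow_card hε) (NeZero.ne ℓ)).pow i).mul
    ((IsUnit.of_pow_eq_one pauliY_pow_card (NeZero.ne ℓ)).pow j)

theorem pauliX_pow_mul_pauliY_pow_mem_pauliGrading [NeZero ℓ] (hε : ε ^ ℓ = 1) (i j : ℕ) :
    pauliX F ℓ ε ^ i * pauliY F ℓ ^ j ∈ pauliGrading F ℓ ε (i, j) := by
  simpa only [pauliGrading, ZMod.val_natCast, pauliX_pow_mul_pauliY_pow_mod hε]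
    using Submodule.mem_span_singleton_self _

theorem pauliGrading_mul_le [NeZero ℓ] (hε : ε ^ ℓ = 1) (g h : ZMod ℓ × ZMod ℓ) :
    pauliGrading F ℓ ε g * pauliGrading F ℓ ε h ≤ pauliGrading F ℓ ε (g + h) := by
  simp only [pauliGrading, Prod.fst_add, Prod.snd_add, ZMod.val_add,
    pauliX_pow_mul_pauliY_pow_mod hε, Submodule.span_mul_span, Set.singleton_mul_singleton,
    Submodule.span_singleton_le_iff_mem,
    pow_mul_pow_mul_pow_mul_pow_of_mul_eq_smul (pauliY_mul_pauliX hε)]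
  exact Submodule.smul_mem _ _ (Submodule.mem_span_singleton_self _)

theorem isUnit_of_mem_pauliGrading [NeZero ℓ] (hε : ε ^ ℓ = 1) {g : ZMod ℓ × ZMod ℓ}
    {x : Matrix (Fin ℓ) (Fin ℓ) F} (hx : x ∈ pauliGrading F ℓ ε g) (hx0 : x ≠ 0) : IsUnit x :=
  (isUnit_pauliX_pow_mul_pauliY_pow hε _ _).of_mem_span_singleton hx hx0

end Pauli

/-- The matrices `XⁱYʲ`, `0 ≤ i,j < ℓ`, form a basis of `M_ℓ(F)`, each of them is
invertible, and the resulting `(ℤ/ℓ × ℤ/ℓ)`-grading makes `M_ℓ(F)` a graded division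
algebra. -/
theorem pauli_basis_and_graded_division
    {F : Type*} [Field F] {ℓ : ℕ} (hℓ : 0 < ℓ) {ε : F}
    (hε : IsPrimitiveRoot ε ℓ) :
    (∃ b : Module.Basis (Fin ℓ × Fin ℓ) F (Matrix (Fin ℓ) (Fin ℓ) F),
      ∀ p : Fin ℓ × Fin ℓ,
        b p = pauliX F ℓ ε ^ ((p.1 : ℕ)) * pauliY F ℓ ^ ((p.2 : ℕ))) ∧
    (∀ i j : ℕ, IsUnit (pauliX F ℓ ε ^ i * pauliY F ℓ ^ j)) ∧
    (∀ i j : ℕ, pauliX F ℓ ε ^ i * pauliY F ℓ ^ j ∈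
        pauliGrading F ℓ ε ((i : ZMod ℓ), (j : ZMod ℓ))) ∧
    (∀ g h : ZMod ℓ × ZMod ℓ,
      pauliGrading F ℓ ε g * pauliGrading F ℓ ε h ≤ pauliGrading F ℓ ε (g + h)) ∧
    (∀ (g : ZMod ℓ × ZMod ℓ) (x : Matrix (Fin ℓ) (Fin ℓ) F),
      x ∈ pauliGrading F ℓ ε g → x ≠ 0 → IsUnit x) := by
  have : NeZero ℓ := ⟨hℓ.ne'⟩
  have hcard : Fintype.card (Fin ℓ × Fin ℓ) = Module.finrank F (Matrix (Fin ℓ) (Fin ℓ) F) := by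
    simp [Module.finrank_matrix]
  have hli := linearIndependent_pauliX_pow_mul_pauliY_pow hε
  refine ⟨⟨_, fun p => congrFun (coe_basisOfLinearIndependentOfCardEqFinrank hli hcard) p⟩,
    isUnit_pauliX_pow_mul_pauliY_pow hε.pow_eq_one,
    pauliX_pow_mul_pauliY_pow_mem_pauliGrading hε.pow_eq_one,
    pauliGrading_mul_le hε.pow_eq_one,
    fun _ _ => isUnit_of_mem_pauliGrading hε.pow_eq_one⟩
end

section
/- Let R be a G-graded associative algebra that is graded simple (has no nonzero proper graded two-sided ideals) and satisfies the descending chain condition on graded left ideals. Then every minimal graded left ideal I of R is generated by a homogeneous idempotent: there exists a homogeneous e ∈ I with e² = e and I = Re. -/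
/-- In a graded simple associative algebra satisfying the descending chain condition on
graded left ideals, every minimal graded left ideal is generated by a homogeneous
idempotent. -/
theorem minimal_graded_left_ideal_generated_by_homogeneous_idempotent
    {F : Type*} [Field F] {G : Type*} [AddCommGroup G] [DecidableEq G]
    {R : Type*} [Ring R] [Algebra F R]
    (𝒜 : G → Submodule F R) [GradedRing 𝒜]
    -- graded simplicity: `R² ≠ 0` and the only graded two-sided ideals are `0` and `R`
    (hsq : ∃ a b : R, a * b ≠ 0)
    (hsimple : ∀ I : Ideal R,
      (∀ (g : G) (x : R), x ∈ I → (DirectSum.decompose 𝒜 x g : R) ∈ I) →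
      (∀ x ∈ I, ∀ r : R, x * r ∈ I) → I = ⊥ ∨ I = ⊤)
    -- descending chain condition on graded left ideals
    (hdcc : ∀ f : ℕ → Ideal R,
      (∀ n (g : G) (x : R), x ∈ f n → (DirectSum.decompose 𝒜 x g : R) ∈ f n) →
      (∀ n, f (n + 1) ≤ f n) → ∃ n, ∀ m, n ≤ m → f m = f n)
    -- `I` is a minimal graded left ideal
    (I : Ideal R)
    (hIhom : ∀ (g : G) (x : R), x ∈ I → (DirectSum.decompose 𝒜 x g : R) ∈ I)
    (hIne : I ≠ ⊥)
    (hImin : ∀ J : Ideal R,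
      (∀ (g : G) (x : R), x ∈ J → (DirectSum.decompose 𝒜 x g : R) ∈ J) →
      J ≤ I → J ≠ ⊥ → J = I) :
    ∃ (g : G) (e : R), e ∈ 𝒜 g ∧ e ∈ I ∧ e * e = e ∧ I = Ideal.span {e} := by
  classical
  -- a nonzero element of I
  obtain ⟨a0, ha0I, ha0ne⟩ : ∃ x ∈ I, x ≠ 0 := by
    by_contra h
    push_neg at h
    exact hIne (le_bot_iff.mp fun x hx => by simpa using h x hx)
  -- Step A : I² ≠ 0
  have hsqI : ∃ x ∈ I, ∃ y ∈ I, x * y ≠ 0 := by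
    by_contra hA
    push_neg at hA
    -- left annihilator of I
    set T1 : Ideal R :=
      { carrier := {x : R | ∀ a ∈ I, x * a = 0}
        add_mem' := fun hx hy a ha => by rw [add_mul, hx a ha, hy a ha, add_zero]
        zero_mem' := fun a ha => zero_mul a
        smul_mem' := fun r x hx a ha => by
          rw [smul_eq_mul, mul_assoc, hx a ha, mul_zero] } with hT1
    have hT1mem : ∀ x : R, x ∈ T1 ↔ ∀ a ∈ I, x * a = 0 := fun x => Iff.rfl
    have hT1hom : ∀ (g : G) (x : R), x ∈ T1 → (DirectSum.decompose 𝒜 x g : R) ∈ T1 := by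
      intro g x hx
      rw [hT1mem] at hx ⊢
      intro a ha
      conv_lhs => rw [← DirectSum.sum_support_decompose 𝒜 a, Finset.mul_sum]
      refine Finset.sum_eq_zero fun h _ => ?_
      rw [← DirectSum.coe_decompose_mul_add_of_right_mem 𝒜
        (SetLike.coe_mem (DirectSum.decompose 𝒜 a h)) (i := g),
        hx _ (hIhom h a ha)]
      simp
    have hT1right : ∀ x ∈ T1, ∀ r : R, x * r ∈ T1 := by
      intro x hx r
      rw [hT1mem] at hx ⊢
      intro a ha
      rw [mul_assoc]
      exact hx (r * a) (I.smul_mem r ha)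
    have hT1top : T1 = ⊤ := by
      rcases hsimple T1 hT1hom hT1right with h | h
      · exfalso
        have : a0 ∈ T1 := fun a ha => hA a0 ha0I a ha
        rw [h] at this
        exact ha0ne (by simpa using this)
      · exact h
    have hRI : ∀ x : R, ∀ a ∈ I, x * a = 0 := by
      intro x a ha
      have : x ∈ T1 := hT1top ▸ Submodule.mem_top
      exact this a ha
    -- right annihilator of R
    set T2 : Ideal R :=
      { carrier := {x : R | ∀ r : R, r * x = 0}
        add_mem' := fun hx hy r => by rw [mul_add, hx r, hy r, add_zero]
        zero_mem' := fun r => mul_zero r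
        smul_mem' := fun c x hx r => by
          rw [smul_eq_mul, ← mul_assoc, hx (r * c)] } with hT2
    have hT2mem : ∀ x : R, x ∈ T2 ↔ ∀ r : R, r * x = 0 := fun x => Iff.rfl
    have hT2hom : ∀ (g : G) (x : R), x ∈ T2 → (DirectSum.decompose 𝒜 x g : R) ∈ T2 := by
      intro g x hx
      rw [hT2mem] at hx ⊢
      intro r
      conv_lhs => rw [← DirectSum.sum_support_decompose 𝒜 r, Finset.sum_mul]
      refine Finset.sum_eq_zero fun h _ => ?_
      rw [← DirectSum.coe_decompose_mul_add_of_left_mem 𝒜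
        (SetLike.coe_mem (DirectSum.decompose 𝒜 r h)) (j := g),
        hx _]
      simp
    have hT2right : ∀ x ∈ T2, ∀ r : R, x * r ∈ T2 := by
      intro x hx r s
      rw [← mul_assoc, hx s, zero_mul]
    have hT2top : T2 = ⊤ := by
      rcases hsimple T2 hT2hom hT2right with h | h
      · exfalso
        have : a0 ∈ T2 := fun r => hRI r a0 ha0I
        rw [h] at this
        exact ha0ne (by simpa using this)
      · exact h
    obtain ⟨u, v, huv⟩ := hsq
    have : v ∈ T2 := hT2top ▸ Submodule.mem_top
    exact huv (this u)
  obtain ⟨x, hxI, y, hyI, hxy⟩ := hsqI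
  -- a homogeneous element a of I with x * a ≠ 0
  obtain ⟨g, hg⟩ : ∃ g : G, x * (DirectSum.decompose 𝒜 y g : R) ≠ 0 := by
    by_contra h
    push_neg at h
    apply hxy
    conv_lhs => rw [← DirectSum.sum_support_decompose 𝒜 y, Finset.mul_sum]
    exact Finset.sum_eq_zero fun h' _ => h h'
  set a : R := (DirectSum.decompose 𝒜 y g : R) with ha
  have haI : a ∈ I := hIhom g y hyI
  have haA : a ∈ 𝒜 g := SetLike.coe_mem _
  have hane : a ≠ 0 := by
    intro h
    exact hg (by rw [h, mul_zero])
  -- J = I * a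
  set J : Ideal R :=
    { carrier := {z : R | ∃ w ∈ I, z = w * a}
      add_mem' := fun {z1 z2} hz1 hz2 => by
        obtain ⟨w1, hw1, rfl⟩ := hz1
        obtain ⟨w2, hw2, rfl⟩ := hz2
        exact ⟨w1 + w2, I.add_mem hw1 hw2, (add_mul w1 w2 a).symm⟩
      zero_mem' := ⟨0, I.zero_mem, (zero_mul a).symm⟩
      smul_mem' := fun r z hz => by
        obtain ⟨w, hw, rfl⟩ := hz
        exact ⟨r * w, I.smul_mem r hw, by rw [smul_eq_mul, mul_assoc]⟩ } with hJ
  have hJhom : ∀ (k : G) (z : R), z ∈ J → (DirectSum.decompose 𝒜 z k : R) ∈ J := by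
    intro k z hz
    obtain ⟨w, hw, rfl⟩ := hz
    have hk : k = (k - g) + g := by abel
    rw [hk, DirectSum.coe_decompose_mul_add_of_right_mem 𝒜 haA]
    exact ⟨_, hIhom (k - g) w hw, rfl⟩
  have hJle : J ≤ I := by
    rintro z ⟨w, hw, rfl⟩
    exact I.smul_mem w haI
  have hJne : J ≠ ⊥ := by
    intro h
    have : x * a ∈ J := ⟨x, hxI, rfl⟩
    rw [h] at this
    exact hg (by simpa using this)
  have hJI : J = I := hImin J hJhom hJle hJne
  -- get w ∈ I with a = w * a
  have haJ : a ∈ J := hJI.symm ▸ haI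
  obtain ⟨w, hwI, hwa⟩ := haJ
  -- e is the degree-0 component of w
  set e : R := (DirectSum.decompose 𝒜 w 0 : R) with he
  have heA : e ∈ 𝒜 (0 : G) := SetLike.coe_mem _
  have heI : e ∈ I := hIhom 0 w hwI
  have hea : e * a = a := by
    have h1 : (DirectSum.decompose 𝒜 (w * a) ((0 : G) + g) : R)
        = (DirectSum.decompose 𝒜 w 0 : R) * a :=
      DirectSum.coe_decompose_mul_add_of_right_mem 𝒜 haA
    rw [← hwa, zero_add, DirectSum.decompose_of_mem_same 𝒜 haA] at h1
    rw [← h1]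
  -- L = annihilator of a inside I
  set L : Ideal R :=
    { carrier := {z : R | z ∈ I ∧ z * a = 0}
      add_mem' := fun {z1 z2} hz1 hz2 =>
        ⟨I.add_mem hz1.1 hz2.1, by rw [add_mul, hz1.2, hz2.2, add_zero]⟩
      zero_mem' := ⟨I.zero_mem, zero_mul a⟩
      smul_mem' := fun r z hz =>
        ⟨I.smul_mem r hz.1, by rw [smul_eq_mul, mul_assoc, hz.2, mul_zero]⟩ } with hL
  have hLhom : ∀ (k : G) (z : R), z ∈ L → (DirectSum.decompose 𝒜 z k : R) ∈ L := by
    intro k z hz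
    refine ⟨hIhom k z hz.1, ?_⟩
    rw [← DirectSum.coe_decompose_mul_add_of_right_mem 𝒜 haA (i := k), hz.2]
    simp
  have hLbot : L = ⊥ := by
    by_contra h
    have hLI : L = I := hImin L hLhom (fun z hz => hz.1) h
    have : e ∈ L := hLI.symm ▸ heI
    exact hane (by rw [← hea, this.2])
  have hee : e * e = e := by
    have hmem : e * e - e ∈ L := by
      refine ⟨I.sub_mem (I.smul_mem e heI) heI, ?_⟩
      rw [sub_mul, mul_assoc, hea, hea, sub_self]
    rw [hLbot] at hmem
    exact sub_eq_zero.mp (by simpa using hmem)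
  have hene : e ≠ 0 := by
    intro h
    exact hane (by rw [← hea, h, zero_mul])
  -- span {e} = I
  set K : Ideal R := Ideal.span {e} with hK
  have hKhom : ∀ (k : G) (z : R), z ∈ K → (DirectSum.decompose 𝒜 z k : R) ∈ K := by
    intro k z hz
    obtain ⟨r, rfl⟩ := Submodule.mem_span_singleton.mp hz
    rw [smul_eq_mul]
    have hk : k = k + (0 : G) := by rw [add_zero]
    rw [hk, DirectSum.coe_decompose_mul_add_of_right_mem 𝒜 heA]
    exact Submodule.smul_mem _ _ (Submodule.mem_span_singleton_self e)
  have hKle : K ≤ I := by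
    rw [hK, Ideal.span_le, Set.singleton_subset_iff]
    exact heI
  have hKne : K ≠ ⊥ := by
    intro h
    have : e ∈ K := Submodule.mem_span_singleton_self e
    rw [h] at this
    exact hene (by simpa using this)
  have hKI : K = I := hImin K hKhom hKle hKne
  exact ⟨0, e, heA, heI, hee, hKI.symm⟩
end

section
/- Let Γ = Γ_M(D,k) be a fine grading on M_n(F) obtained from a division grading on D = M_ℓ(F) with support T and bicharacter β, where n = kℓ. Then the Weyl group of Γ is isomorphic to T^{k-1} ⋊ (Aut(T,β) × Sym(k)), where T^{k-1} is identified with T^k/T (T embedded diagonally) and Aut(T,β) and Sym(k) act on it componentwise and by permutation respectively. -/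
/-- The subgroup of `ℤ^k` of tuples with zero sum. -/
def sumZero (k : ℕ) : AddSubgroup (Fin k → ℤ) where
  carrier := {x | ∑ i, x i = 0}
  zero_mem' := by simp
  add_mem' := by
    intro a b ha hb
    simp only [Set.mem_setOf_eq, Pi.add_apply, Finset.sum_add_distrib] at *
    rw [ha, hb, add_zero]
  neg_mem' := by
    intro a ha
    simp only [Set.mem_setOf_eq, Pi.neg_apply, Finset.sum_neg_distrib] at *
    rw [ha, neg_zero]

/-- The multiplicative group structure on `AddAut A` (composition), as in the older Mathlib. -/
instance addAutMulGroup (A : Type*) [Add A] : Group (AddAut A) where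
  mul g h := AddEquiv.trans h g
  one := AddEquiv.refl _
  inv := AddEquiv.symm
  mul_assoc _ _ _ := rfl
  one_mul _ := rfl
  mul_one _ := rfl
  inv_mul_cancel := AddEquiv.self_trans_symm

/-- The fine grading `Γ_M(D,k)` on `M_k(D)`, realized over its universal group
`ℤ₀^k × T`: the component of degree `g` is spanned by the matrices `E_{ij} X_t`
with `g̃_i - g̃_j + deg t = g`. -/
def matrixFineGrading {F : Type*} [Field F] {ℓ k : ℕ} {T : Type*} [AddCommGroup T]
    (X : T → (Matrix (Fin ℓ) (Fin ℓ) F)ˣ) :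
    (↥(sumZero k) × T) → Submodule F (Matrix (Fin k) (Fin k) (Matrix (Fin ℓ) (Fin ℓ) F)) :=
  fun g => Submodule.span F
    {m | ∃ (i j : Fin k) (t : T),
      (g.1 : Fin k → ℤ) = Pi.single i 1 - Pi.single j 1 ∧ g.2 = t ∧
      m = Matrix.single i j (X t : Matrix (Fin ℓ) (Fin ℓ) F)}


/-!
An automorphism `ψ` of `M_k(D)` permuting the components of `Γ` induces an automorphism `μ` of
the universal group `ℤ₀^k × T`. The component of degree `(0, t)` contains the invertible matrix
`diag(X_t, …, X_t)`, whereas the component of degree `(ε_i - ε_j, t)`, `i ≠ j`, is spanned by a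
square-zero matrix; hence `μ` preserves `0 × T` and restricts there to some `π`, and comparing the
commutation relations of such diagonal matrices before and after `ψ` gives `π ∈ Aut(T, β)`.
As `E_ij X_0 · E_jl X_0 ≠ 0`, the images of the roots chain like matrix units, so `μ` permutes
the roots `ε_i - ε_j` through some `σ ∈ Sym(k)`, and `μ (x, t) = (σ x, π t + f (σ x))` with
`f ∈ Hom(ℤ₀^k, T) ≅ T^k / T`.

Conversely every such affine map is realized: `σ` by reindexing, `f` by conjugating with
`diag(X_{s_1}, …, X_{s_k})`, and `π` by an automorphism of `D` sending each `X_t` to a multiple of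
`X_{π t}`. The latter exists because, for the factor set `σ` of `D`, `σ (π u) (π v) / σ u v` is a
symmetric 2-cocycle (as `π` preserves `β`) with values in the divisible group `Fˣ`, hence a
coboundary. The affine maps form `(T^k / T) ⋊ (Aut(T, β) × Sym(k))`, acting faithfully.
-/

open Matrix

-- Mathlib writes the group `AddAut A` additively; these evaluate the multiplicative copy
-- `addAutMulGroup` that the statement uses.
section AddAut

variable {A : Type*} [Add A]

@[simp] theorem AddAut.one_apply' (x : A) : (1 : AddAut A) x = x := rfl

@[simp] theorem AddAut.mul_apply' (g h : AddAut A) (x : A) : (g * h) x = g (h x) := rfl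

@[simp] theorem AddAut.inv_apply' (g : AddAut A) (x : A) : g⁻¹ x = g.symm x := rfl

end AddAut

namespace sumZero

variable {k : ℕ}

theorem mem_iff {x : Fin k → ℤ} : x ∈ sumZero k ↔ ∑ i, x i = 0 := Iff.rfl

def root (i j : Fin k) : sumZero k :=
  ⟨Pi.single i 1 - Pi.single j 1, by simp [mem_iff, Finset.sum_sub_distrib]⟩

@[simp] theorem coe_root (i j : Fin k) :
    (root i j : Fin k → ℤ) = Pi.single i 1 - Pi.single j 1 := rfl

@[simp] theorem root_self (i : Fin k) : root i i = 0 := by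
  ext; simp

theorem root_eq_zero_iff {i j : Fin k} : root i j = 0 ↔ i = j := by
  refine ⟨fun h => by_contra fun hij => ?_, fun h => h ▸ root_self i⟩
  simpa [Pi.single_apply, Ne.symm hij] using congr_fun (congrArg Subtype.val h) i

theorem root_inj {i j i' j' : Fin k} (hij : i ≠ j) :
    root i j = root i' j' ↔ i = i' ∧ j = j' := by
  refine ⟨fun h => ?_, by rintro ⟨rfl, rfl⟩; rfl⟩
  have h' (m : Fin k) := congr_fun (congrArg Subtype.val h) m
  simp only [coe_root, Pi.sub_apply, Pi.single_apply] at h'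
  have hi : i = i' := by by_contra hi; have := h' i; split_ifs at this <;> omega
  subst hi
  exact ⟨rfl, by by_contra hj; have := h' j; split_ifs at this <;> omega⟩

theorem root_sub_root (i j l : Fin k) : root i l - root j l = root i j := by
  ext; simp

theorem sum_smul_root (x : sumZero k) (j : Fin k) : ∑ i, (x : Fin k → ℤ) i • root i j = x := by
  ext m
  simp [Pi.single_apply, mul_sub, Finset.sum_sub_distrib, mem_iff.1 x.2]

theorem hom_ext {M : Type*} [AddCommGroup M] {f g : sumZero k →+ M}
    (h : ∀ i j, f (root i j) = g (root i j)) : f = g := by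
  ext x
  rcases isEmpty_or_nonempty (Fin k) with hk | ⟨⟨j⟩⟩
  · rw [Subsingleton.elim x 0, map_zero, map_zero]
  · rw [← sum_smul_root x j, map_sum, map_sum]
    simp only [map_zsmul, h]

def permute : Equiv.Perm (Fin k) →* AddAut (sumZero k) where
  toFun σ :=
    { toFun x := ⟨fun i => (x : Fin k → ℤ) (σ.symm i), by
        rw [mem_iff, Equiv.sum_comp σ.symm (x : Fin k → ℤ)]; exact x.2⟩
      invFun x := ⟨fun i => (x : Fin k → ℤ) (σ i), by
        rw [mem_iff, Equiv.sum_comp σ (x : Fin k → ℤ)]; exact x.2⟩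
      left_inv x := by ext; simp
      right_inv x := by ext; simp
      map_add' _ _ := rfl }
  map_one' := rfl
  map_mul' _ _ := rfl

@[simp] theorem coe_permute_apply (σ : Equiv.Perm (Fin k)) (x : sumZero k) (i : Fin k) :
    (permute σ x : Fin k → ℤ) i = (x : Fin k → ℤ) (σ.symm i) := rfl

theorem permute_root (σ : Equiv.Perm (Fin k)) (i j : Fin k) :
    permute σ (root i j) = root (σ i) (σ j) := by
  ext m
  simp [Pi.single_apply, Equiv.symm_apply_eq]

theorem permute_injective : Function.Injective (permute (k := k)) := by
  refine (injective_iff_map_eq_one _).2 fun σ hσ => Equiv.ext fun i => ?_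
  by_cases h : ∃ j, j ≠ i
  · obtain ⟨j, hj⟩ := h
    have := permute_root σ i j
    rw [hσ, AddAut.one_apply'] at this
    exact ((root_inj (Ne.symm hj)).1 this).1.symm
  · simp only [ne_eq, not_exists, not_not] at h
    exact h _

variable {T : Type*} [AddCommGroup T]

def pairing : (Fin k → T) →+ sumZero k →+ T :=
  AddMonoidHom.mk' (fun s => AddMonoidHom.mk' (fun x => ∑ i, (x : Fin k → ℤ) i • s i)
    (fun x y => by simp [add_smul, Finset.sum_add_distrib]))
    (fun s s' => by ext x; simp [smul_add, Finset.sum_add_distrib])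

theorem pairing_apply (s : Fin k → T) (x : sumZero k) :
    pairing s x = ∑ i, (x : Fin k → ℤ) i • s i := rfl

theorem pairing_root (s : Fin k → T) (i j : Fin k) : pairing s (root i j) = s i - s j := by
  simp [pairing_apply, sub_smul, Finset.sum_sub_distrib, Pi.single_apply]

theorem pairing_surjective : Function.Surjective (pairing (k := k) (T := T)) := by
  intro f
  rcases isEmpty_or_nonempty (Fin k) with hk | ⟨⟨l⟩⟩
  · exact ⟨0, hom_ext fun i => isEmptyElim i⟩
  · refine ⟨fun i => f (root i l), hom_ext fun i j => ?_⟩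
    rw [pairing_root, ← map_sub, root_sub_root]

theorem pairing_eq_zero_iff (s : Fin k → T) : pairing s = 0 ↔ ∃ t, (fun _ => t) = s := by
  constructor
  · intro h
    rcases isEmpty_or_nonempty (Fin k) with hk | ⟨⟨l⟩⟩
    · exact ⟨0, funext isEmptyElim⟩
    · refine ⟨s l, funext fun i => (sub_eq_zero.1 ?_).symm⟩
      rw [← pairing_root, h, AddMonoidHom.zero_apply]
  · rintro ⟨t, rfl⟩
    ext x
    simp [pairing_apply, ← Finset.sum_smul, mem_iff.1 x.2]

variable (k T) in
noncomputable def quotientDiagonalEquiv :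
    (Fin k → T) ⧸ (AddMonoidHom.mk' (fun t => (fun _ : Fin k => t)) (fun _ _ => rfl)).range ≃+
      (sumZero k →+ T) :=
  (QuotientAddGroup.quotientAddEquivOfEq (by ext s; exact (pairing_eq_zero_iff s).symm)).trans
    (QuotientAddGroup.quotientKerEquivOfSurjective _ pairing_surjective)

end sumZero

namespace AddAut

variable {G T : Type*} [AddCommGroup G] [AddCommGroup T]

def shear : Multiplicative (G →+ T) →* AddAut (G × T) where
  toFun f :=
    { toFun p := (p.1, p.2 + f.toAdd p.1)
      invFun p := (p.1, p.2 - f.toAdd p.1)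
      left_inv p := by simp
      right_inv p := by simp
      map_add' p q := by ext <;> simp [add_add_add_comm] }
  map_one' := by ext <;> simp
  map_mul' f g := by ext <;> simp; abel

@[simp] theorem shear_apply (f : Multiplicative (G →+ T)) (p : G × T) :
    shear f p = (p.1, p.2 + f.toAdd p.1) := rfl

def prodCongrHom : AddAut G × AddAut T →* AddAut (G × T) where
  toFun e := e.1.prodCongr e.2
  map_one' := rfl
  map_mul' _ _ := rfl

@[simp] theorem prodCongrHom_apply (e : AddAut G × AddAut T) (p : G × T) :
    prodCongrHom e p = (e.1 p.1, e.2 p.2) := rfl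

def homAction : AddAut G × AddAut T →* MulAut (Multiplicative (G →+ T)) where
  toFun e := AddEquiv.toMultiplicative
    { toFun f := e.2.toAddMonoidHom.comp (f.comp e.1.symm.toAddMonoidHom)
      invFun f := e.2.symm.toAddMonoidHom.comp (f.comp e.1.toAddMonoidHom)
      left_inv f := by ext; simp
      right_inv f := by ext; simp
      map_add' f g := by ext; simp }
  map_one' := rfl
  map_mul' _ _ := rfl

@[simp] theorem homAction_apply (e : AddAut G × AddAut T) (f : Multiplicative (G →+ T)) (x : G) :
    (homAction e f).toAdd x = e.2 (f.toAdd (e.1.symm x)) := rfl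

theorem prodCongrHom_mul_shear (e : AddAut G × AddAut T) (f : Multiplicative (G →+ T)) :
    prodCongrHom e * shear f = shear (homAction e f) * prodCongrHom e := by
  ext p <;> simp

variable {P : Type*} [Group P]

def affineHom (ι : P →* AddAut G × AddAut T) :
    Multiplicative (G →+ T) ⋊[homAction.comp ι] P →* AddAut (G × T) :=
  SemidirectProduct.lift shear (prodCongrHom.comp ι) fun p => MonoidHom.ext fun f => by
    simp only [MonoidHom.comp_apply, MulEquiv.coe_toMonoidHom, MulAut.conj_apply,
      prodCongrHom_mul_shear, mul_inv_cancel_right]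

theorem affineHom_eq (ι : P →* AddAut G × AddAut T)
    (a : Multiplicative (G →+ T) ⋊[homAction.comp ι] P) :
    affineHom ι a = shear a.left * prodCongrHom (ι a.right) := by
  conv_lhs => rw [← SemidirectProduct.inl_left_mul_inr_right a]
  rw [map_mul, affineHom, SemidirectProduct.lift_inl, SemidirectProduct.lift_inr]
  rfl

theorem affineHom_apply (ι : P →* AddAut G × AddAut T)
    (a : Multiplicative (G →+ T) ⋊[homAction.comp ι] P) (p : G × T) :
    affineHom ι a p = ((ι a.right).1 p.1, (ι a.right).2 p.2 + a.left.toAdd ((ι a.right).1 p.1)) :=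
  by simp [affineHom_eq]

theorem affineHom_injective {ι : P →* AddAut G × AddAut T} (hι : Function.Injective ι) :
    Function.Injective (affineHom ι) := by
  refine (injective_iff_map_eq_one _).2 fun a ha => ?_
  have h (p : G × T) := congrArg (fun μ : AddAut (G × T) => μ p) ha
  simp only [affineHom_apply, AddAut.one_apply', Prod.ext_iff] at h
  have hι₁ : ι a.right = 1 := by
    ext x
    · simpa using (h (x, 0)).1
    · simpa using (h (0, x)).2
  refine SemidirectProduct.ext ?_ (hι (hι₁.trans (map_one ι).symm))
  ext x
  simpa [hι₁] using (h (x, 0)).2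

theorem mem_range_affineHom {ι : P →* AddAut G × AddAut T} {μ : AddAut (G × T)} (q : P)
    (h₀ : ∀ t, μ (0, t) = (0, (ι q).2 t)) (h₁ : ∀ x, (μ (x, 0)).1 = (ι q).1 x) :
    μ ∈ (affineHom ι).range := by
  let f : G →+ T :=
    ((AddMonoidHom.snd G T).comp (μ.toAddMonoidHom.comp (AddMonoidHom.inl G T))).comp
      (ι q).1.symm.toAddMonoidHom
  refine ⟨⟨Multiplicative.ofAdd f, q⟩, AddEquiv.ext fun p => ?_⟩
  have hp : μ p = μ (p.1, 0) + μ (0, p.2) := by rw [← map_add, Prod.mk_add_mk, add_zero, zero_add]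
  rw [affineHom_apply, hp, h₀, Prod.mk_add_mk, add_zero, h₁, add_comm]
  simp [f]

theorem exists_apply_zero_eq (μ : AddAut (G × T)) (h : ∀ t, (μ (0, t)).1 = 0)
    (h' : ∀ t, (μ.symm (0, t)).1 = 0) : ∃ π : AddAut T, ∀ t, μ (0, t) = (0, π t) := by
  have e (t : T) : μ (0, t) = (0, (μ (0, t)).2) := Prod.ext (h t) rfl
  have e' (t : T) : μ.symm (0, t) = (0, (μ.symm (0, t)).2) := Prod.ext (h' t) rfl
  refine ⟨{ toFun t := (μ (0, t)).2
            invFun t := (μ.symm (0, t)).2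
            left_inv t := by simp only [← e, AddEquiv.symm_apply_apply]
            right_inv t := by simp only [← e', AddEquiv.apply_symm_apply]
            map_add' t t' := by rw [← Prod.snd_add, ← map_add, Prod.mk_add_mk, add_zero] }, e⟩

end AddAut

theorem SemidirectProduct.exists_normal_complement {N G W : Type*} [Group N] [Group G] [Group W]
    {φ : G →* MulAut N} (e : N ⋊[φ] G ≃* W) :
    ∃ N' H' : Subgroup W, N'.Normal ∧ N' ⊓ H' = ⊥ ∧ N' ⊔ H' = ⊤ ∧
      Nonempty (N' ≃* N) ∧ Nonempty (H' ≃* G) := by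
  refine ⟨(e.toMonoidHom.comp inl).range, (e.toMonoidHom.comp inr).range, ?_, ?_, ?_,
    ⟨(MonoidHom.ofInjective (e.injective.comp inl_injective)).symm⟩,
    ⟨(MonoidHom.ofInjective (e.injective.comp inr_injective)).symm⟩⟩
  · rw [MonoidHom.range_comp, range_inl_eq_ker_rightHom]
    exact (MonoidHom.normal_ker _).map _ e.surjective
  · rw [MonoidHom.range_comp, MonoidHom.range_comp, ← Subgroup.map_inf _ _ _ e.injective,
      eq_bot_iff]
    rintro _ ⟨x, ⟨⟨n, rfl⟩, ⟨g, hg⟩⟩, rfl⟩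
    have : g = 1 := by simpa using congrArg rightHom hg
    simp [← hg, this]
  · rw [MonoidHom.range_comp, MonoidHom.range_comp, ← Subgroup.map_sup, eq_top_iff]
    intro w _
    obtain ⟨x, rfl⟩ := e.surjective w
    rw [← inl_left_mul_inr_right x]
    exact Subgroup.mem_map_of_mem _ (Subgroup.mul_mem_sup ⟨x.left, rfl⟩ ⟨x.right, rfl⟩)

def bicharacterAut {T M : Type*} [AddCommGroup T] (β : T → T → M) : Subgroup (AddAut T) where
  carrier := {π | ∀ u v, β (π u) (π v) = β u v}
  one_mem' _ _ := rfl
  mul_mem' h₁ h₂ u v := (h₁ _ _).trans (h₂ u v)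
  inv_mem' {π} h u v := by simpa using (h (π⁻¹ u) (π⁻¹ v)).symm

section WeylHom

variable (k : ℕ) {T : Type*} [AddCommGroup T] (B : Subgroup (AddAut T))

def weylLinearPart : B × Equiv.Perm (Fin k) →* AddAut (sumZero k) × AddAut T :=
  (sumZero.permute.comp (MonoidHom.snd _ _)).prod (B.subtype.comp (MonoidHom.fst _ _))

@[simp] theorem weylLinearPart_apply (q : B × Equiv.Perm (Fin k)) :
    weylLinearPart k B q = (sumZero.permute q.2, (q.1 : AddAut T)) := rfl

theorem weylLinearPart_injective : Function.Injective (weylLinearPart k B) := fun _ _ h =>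
  Prod.ext (Subtype.ext (congrArg Prod.snd h)) (sumZero.permute_injective (congrArg Prod.fst h))

/-- `Hom(ℤ₀^k, T) ⋊ (B × Sym(k))`, acting on `ℤ₀^k × T` by `(x, t) ↦ (σ x, π t + f (σ x))`;
here `Hom(ℤ₀^k, T) ≅ T^k / T` by `sumZero.quotientDiagonalEquiv`. -/
abbrev weylHom := AddAut.affineHom (weylLinearPart k B)

end WeylHom

section SymmetricCocycle

variable {G A : Type*} [AddCommGroup G] [CommGroup A]

/-- The abelian extension of `G` by `A` with factor set `τ`; its group law
`(u, a) + (v, b) = (u + v, a * b * τ u v)` is `CocycleExtension.addCommGroup`. -/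
@[ext] structure CocycleExtension (_τ : G → G → A) where
  base : G
  fibre : A

@[reducible] def CocycleExtension.addCommGroup {τ : G → G → A} (hzero : ∀ v, τ 0 v = 1)
    (hsymm : ∀ u v, τ u v = τ v u)
    (hcocycle : ∀ u v w, τ u v * τ (u + v) w = τ v w * τ u (v + w)) :
    AddCommGroup (CocycleExtension τ) :=
  letI : Add (CocycleExtension τ) :=
    ⟨fun x y => ⟨x.base + y.base, x.fibre * y.fibre * τ x.base y.base⟩⟩
  letI : Zero (CocycleExtension τ) := ⟨⟨0, 1⟩⟩
  letI : Neg (CocycleExtension τ) := ⟨fun x => ⟨-x.base, (x.fibre * τ x.base (-x.base))⁻¹⟩⟩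
  { AddGroup.ofLeftAxioms
      (fun x y z => CocycleExtension.ext (add_assoc _ _ _) (by
        show x.fibre * y.fibre * τ x.base y.base * z.fibre * τ (x.base + y.base) z.base
          = x.fibre * (y.fibre * z.fibre * τ y.base z.base) * τ x.base (y.base + z.base)
        calc _ = x.fibre * y.fibre * z.fibre * (τ x.base y.base * τ (x.base + y.base) z.base) := by
                simp only [mul_comm, mul_left_comm]
          _ = _ := by rw [hcocycle]; simp only [mul_comm, mul_left_comm]))
      (fun x => CocycleExtension.ext (zero_add _) (by
        show 1 * _ * τ 0 _ = _; rw [hzero, one_mul, mul_one]))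
      (fun x => CocycleExtension.ext (neg_add_cancel _) (by
        show (x.fibre * τ x.base (-x.base))⁻¹ * x.fibre * τ (-x.base) x.base = 1
        rw [hsymm (-x.base)]; group)) with
    add_comm := fun x y => CocycleExtension.ext (add_comm _ _) (by
      show _ * _ * τ _ _ = _ * _ * τ _ _; rw [hsymm, mul_comm x.fibre]) }

theorem exists_eq_mul_div_of_symm_cocycle [RootableBy A ℕ] (τ : G → G → A)
    (hzero : ∀ v, τ 0 v = 1) (hsymm : ∀ u v, τ u v = τ v u)
    (hcocycle : ∀ u v w, τ u v * τ (u + v) w = τ v w * τ u (v + w)) :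
    ∃ c : G → A, ∀ u v, τ u v = c u * c v / c (u + v) := by
  let _ := CocycleExtension.addCommGroup hzero hsymm hcocycle
  let _ : DivisibleBy (Additive A) ℕ :=
    divisibleByOfSMulRightSurj _ _ fun hn => RootableBy.surjective_pow A ℕ hn
  let _ := AddGroup.divisibleByIntOfDivisibleByNat (Additive A)
  -- `A` is the fibre over `0`, and Baer's criterion retracts the extension onto it.
  let ι : Additive A →+ CocycleExtension τ :=
    { toFun a := ⟨0, a.toMul⟩
      map_zero' := rfl
      map_add' a b := CocycleExtension.ext (add_zero 0).symm (by
        show a.toMul * b.toMul = a.toMul * b.toMul * τ 0 0; rw [hzero, mul_one]) }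
  have hι : Function.Injective ι := fun a b h =>
    Additive.toMul.injective (congrArg CocycleExtension.fibre h)
  obtain ⟨r, hr⟩ := (Module.Baer.of_divisible (Additive A)).extension_property_addMonoidHom ι hι
    (AddMonoidHom.id _)
  refine ⟨fun u => (r ⟨u, 1⟩).toMul, fun u v => ?_⟩
  have hsplit : (⟨u, 1⟩ + ⟨v, 1⟩ : CocycleExtension τ) = ⟨u + v, 1⟩ + ι (Additive.ofMul (τ u v)) :=
    CocycleExtension.ext (add_zero _).symm (by
      show 1 * 1 * τ u v = 1 * τ u v * τ (u + v) 0
      rw [hsymm _ 0, hzero, one_mul, one_mul, mul_one])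
  have := congrArg (fun x => (r x).toMul) hsplit
  simp only [map_add, toMul_add] at this
  rw [eq_div_iff_mul_eq', this, ← AddMonoidHom.comp_apply, hr]
  simp [mul_comm]

end SymmetricCocycle

theorem IsAlgClosed.units_pow_surjective {F : Type*} [Field F] [IsAlgClosed F] {n : ℕ}
    (hn : n ≠ 0) : Function.Surjective fun x : Fˣ => x ^ n := fun y => by
  obtain ⟨z, hz⟩ := IsAlgClosed.exists_pow_nat_eq (y : F) (Nat.pos_of_ne_zero hn)
  have hz0 : z ≠ 0 := fun h => y.ne_zero (by rw [← hz, h, zero_pow hn])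
  exact ⟨Units.mk0 z hz0, Units.ext (by simpa using hz)⟩

section FactorSet

variable {F A T : Type*} [Field F] [Ring A] [Algebra F A] [AddCommGroup T] {X : T → Aˣ}
  {σ : T → T → Fˣ}

theorem factorSet_cocycle [Nontrivial A]
    (hσ : ∀ u v, (X u : A) * X v = (σ u v : F) • (X (u + v) : A)) (u v w : T) :
    σ u v * σ (u + v) w = σ v w * σ u (v + w) := by
  refine Units.ext (smul_left_injective F (X (u + v + w)).ne_zero ?_)
  simp only [Units.val_mul, mul_smul]
  rw [← hσ, ← smul_mul_assoc, ← hσ, add_assoc, ← hσ, ← mul_smul_comm, ← hσ, mul_assoc]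

theorem factorSet_zero_left [Nontrivial A]
    (hσ : ∀ u v, (X u : A) * X v = (σ u v : F) • (X (u + v) : A)) (hone : X 0 = 1) (v : T) :
    σ 0 v = 1 := by
  refine Units.ext (smul_left_injective F (X v).ne_zero ?_)
  simpa [hone] using (hσ 0 v).symm

theorem commutator_mul_factorSet [Nontrivial A]
    (hσ : ∀ u v, (X u : A) * X v = (σ u v : F) • (X (u + v) : A)) {β : T → T → Fˣ}
    (hcomm : ∀ u v, (X u : A) * X v = (β u v : F) • ((X v : A) * X u)) (u v : T) :
    β u v * σ v u = σ u v := by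
  refine Units.ext (smul_left_injective F (X (u + v)).ne_zero ?_)
  simp only [Units.val_mul, mul_smul]
  rw [← hσ u v, hcomm, hσ v u, add_comm v u]

theorem exists_algEquiv_of_factorSet (b : Module.Basis T F A) (hb : ∀ t, b t = X t)
    (hone : X 0 = 1) (hσ : ∀ u v, (X u : A) * X v = (σ u v : F) • (X (u + v) : A))
    (π : T ≃+ T) (d : T → Fˣ) (hd : ∀ u v, d u * d v * σ (π u) (π v) = σ u v * d (u + v)) :
    ∃ φ : A ≃ₐ[F] A, ∀ t, φ (X t) = (d t : F) • (X (π t) : A) := by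
  let e := b.equiv ((b.reindex π.toEquiv.symm).unitsSMul d) (Equiv.refl T)
  have he (t : T) : e (X t) = (d t : F) • (X (π t) : A) := by
    rw [← hb, Module.Basis.equiv_apply, Module.Basis.unitsSMul_apply, Module.Basis.reindex_apply,
      hb]
    rfl
  have hd0 : d 0 = 1 := by
    have h := hd 0 0
    rw [map_zero, add_zero, mul_assoc, mul_comm (σ 0 0)] at h
    exact mul_eq_right.1 (mul_left_cancel h)
  have hmul : (LinearMap.mul F A).compr₂ e.toLinearMap
      = (LinearMap.mul F A).compl₁₂ e.toLinearMap e.toLinearMap := by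
    refine b.ext fun u => b.ext fun v => ?_
    simp only [LinearMap.compr₂_apply, LinearMap.compl₁₂_apply, LinearMap.mul_apply',
      LinearEquiv.coe_coe, hb]
    rw [hσ, map_smul]
    simp only [he]
    rw [smul_mul_smul_comm, hσ, smul_smul, smul_smul, map_add]
    congr 1
    exact_mod_cast congrArg Units.val (hd u v).symm
  refine ⟨AlgEquiv.ofLinearEquiv e ?_ fun x y => ?_, he⟩
  · simpa [hone, hd0] using he 0
  · simpa using LinearMap.congr_fun₂ hmul x y

theorem exists_algEquiv_map_eq_smul [IsAlgClosed F] [Nontrivial A] (b : Module.Basis T F A)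
    (hb : ∀ t, b t = X t) (hone : X 0 = 1)
    (hgrade : ∀ u v, ∃ c : Fˣ, (X u : A) * X v = (c : F) • (X (u + v) : A))
    {β : T → T → Fˣ} (hcomm : ∀ u v, (X u : A) * X v = (β u v : F) • ((X v : A) * X u))
    (π : T ≃+ T) (hπ : ∀ u v, β (π u) (π v) = β u v) :
    ∃ (φ : A ≃ₐ[F] A) (d : T → Fˣ), ∀ t, φ (X t) = (d t : F) • (X (π t) : A) := by
  choose σ hσ using hgrade
  let _ : RootableBy Fˣ ℕ := rootableByOfPowLeftSurj _ _ IsAlgClosed.units_pow_surjective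
  obtain ⟨c, hc⟩ := exists_eq_mul_div_of_symm_cocycle (fun u v => σ (π u) (π v) / σ u v)
    (fun v => by simp [factorSet_zero_left hσ hone])
    (fun u v => by
      rw [← commutator_mul_factorSet hσ hcomm u v, ← commutator_mul_factorSet hσ hcomm,
        hπ, mul_div_mul_left_eq_div])
    (fun u v w => by
      have h := factorSet_cocycle hσ (π u) (π v) (π w)
      rw [← map_add, ← map_add] at h
      rw [div_mul_div_comm, div_mul_div_comm, h, factorSet_cocycle hσ])
  refine ⟨_, fun t => (c t)⁻¹,
    (exists_algEquiv_of_factorSet b hb hone hσ π _ fun u v => ?_).choose_spec⟩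
  have h := congrArg Units.val (hc u v)
  ext
  push_cast at h ⊢
  field_simp at h ⊢
  linear_combination h

theorem exists_mul_mul_inv_eq_smul (hone : X 0 = 1)
    (hgrade : ∀ u v, ∃ c : Fˣ, (X u : A) * X v = (c : F) • (X (u + v) : A)) (a t e : T) :
    ∃ c : Fˣ, (X a : A) * X t * ↑(X e)⁻¹ = (c : F) • (X (a + t - e) : A) := by
  obtain ⟨c₁, h₁⟩ := hgrade e (-e)
  obtain ⟨c₂, h₂⟩ := hgrade a t
  obtain ⟨c₃, h₃⟩ := hgrade (a + t) (-e)
  have hinv : (↑(X e)⁻¹ : A) = ((c₁⁻¹ : Fˣ) : F) • (X (-e) : A) := by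
    rw [add_neg_cancel, hone, Units.val_one] at h₁
    rw [← Units.inv_mul_cancel_left (X e) (X (-e) : A), h₁, mul_smul_comm, mul_one, smul_smul]
    simp
  refine ⟨c₂ * c₁⁻¹ * c₃, ?_⟩
  rw [hinv, h₂, mul_smul_comm, smul_mul_assoc, h₃, ← sub_eq_add_neg, smul_smul, smul_smul]
  simp [mul_comm]

end FactorSet

theorem Matrix.single_ne_zero {m n α : Type*} [DecidableEq m] [DecidableEq n] [Zero α]
    (i : m) (j : n) {a : α} (ha : a ≠ 0) : single i j a ≠ 0 :=
  fun h => ha (by simpa using congr_fun₂ h i j)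

theorem Matrix.diagonal_mul_single_mul_diagonal {n α : Type*} [Fintype n] [DecidableEq n]
    [Semiring α] (d d' : n → α) (i j : n) (a : α) :
    diagonal d * single i j a * diagonal d' = single i j (d i * a * d' j) := by
  ext p q
  simp only [mul_diagonal, diagonal_mul, single_apply]
  split_ifs <;> simp_all

def Matrix.diagonalUnits {n α : Type*} [Fintype n] [DecidableEq n] [Semiring α] (u : n → αˣ) :
    (Matrix n n α)ˣ :=
  Units.map (diagonalRingHom n α : (n → α) →* Matrix n n α) (MulEquiv.piUnits.symm u)

theorem Submodule.map_span_eq_of_units_smul {R M N : Type*} [CommRing R] [AddCommGroup M]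
    [AddCommGroup N] [Module R M] [Module R N] (e : M →ₗ[R] N) {S : Set M} {S' : Set N}
    (h₁ : ∀ m ∈ S, ∃ c : Rˣ, ∃ m' ∈ S', e m = c • m')
    (h₂ : ∀ m' ∈ S', ∃ c : Rˣ, ∃ m ∈ S, e m = c • m') :
    (span R S).map e = span R S' := by
  rw [map_span]
  refine le_antisymm (span_le.2 ?_) (span_le.2 fun m' hm' => ?_)
  · rintro _ ⟨m, hm, rfl⟩
    obtain ⟨c, m', hm', he⟩ := h₁ m hm
    exact he ▸ smul_mem _ _ (subset_span hm')
  · obtain ⟨c, m, hm, he⟩ := h₂ m' hm'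
    rw [← inv_smul_smul c m', ← he]
    exact smul_mem _ _ (subset_span ⟨m, hm, rfl⟩)

theorem Equiv.Perm.exists_of_chain {α : Type*} [Finite α] (a b : α → α → α)
    (hab : ∀ i j, i ≠ j → a i j ≠ b i j)
    (hchain : ∀ i j l, i ≠ j → j ≠ l → b i j = a j l) :
    ∃ σ : Equiv.Perm α, ∀ i j, i ≠ j → a i j = σ i ∧ b i j = σ j := by
  classical
  let f (i : α) : α := if h : ∃ j, j ≠ i then a i h.choose else i
  have ha (i j : α) (hij : i ≠ j) : a i j = f i := by
    have h : ∃ j, j ≠ i := ⟨j, Ne.symm hij⟩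
    simp only [f, dif_pos h]
    rw [← hchain j i j (Ne.symm hij) hij, hchain j i _ (Ne.symm hij) (Ne.symm h.choose_spec)]
  have hb (i j : α) (hij : i ≠ j) : b i j = f j := by
    rw [hchain i j i hij (Ne.symm hij), ha j i (Ne.symm hij)]
  have hf : Function.Injective f := fun i j hfij => by_contra fun hij =>
    hab i j hij (by rw [ha i j hij, hb i j hij, hfij])
  exact ⟨Equiv.ofBijective f hf.bijective_of_finite, fun i j hij => ⟨ha i j hij, hb i j hij⟩⟩

namespace MatrixFineGrading

open sumZero

variable {F : Type*} [Field F] {ℓ k : ℕ} {T : Type*} [AddCommGroup T]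
  {X : T → (Matrix (Fin ℓ) (Fin ℓ) F)ˣ}

local notation "𝔻" => Matrix (Fin ℓ) (Fin ℓ) F

theorem eq_span (X : T → 𝔻ˣ) (g : sumZero k × T) :
    matrixFineGrading X g =
      Submodule.span F {m | ∃ i j, g.1 = root i j ∧ m = single i j (X g.2 : 𝔻)} := by
  simp only [matrixFineGrading, Subtype.ext_iff, coe_root]
  congr 1
  ext m
  exact ⟨fun ⟨i, j, t, h, ht, hm⟩ => ⟨i, j, h, ht ▸ hm⟩, fun ⟨i, j, h, hm⟩ => ⟨i, j, _, h, rfl, hm⟩⟩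

theorem single_mem (X : T → 𝔻ˣ) (i j : Fin k) (t : T) :
    single i j (X t : 𝔻) ∈ matrixFineGrading X (root i j, t) := by
  rw [eq_span]
  exact Submodule.subset_span ⟨i, j, rfl, rfl⟩

theorem eq_span_single {i j : Fin k} (hij : i ≠ j) (t : T) :
    matrixFineGrading X (root i j, t) = Submodule.span F {single i j (X t : 𝔻)} := by
  rw [eq_span]
  congr 1
  ext m
  simp only [Set.mem_ofPred_eq, Set.mem_singleton_iff, root_inj hij]
  exact ⟨by rintro ⟨_, _, ⟨rfl, rfl⟩, rfl⟩; rfl, fun hm => ⟨i, j, ⟨rfl, rfl⟩, hm⟩⟩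

theorem eq_span_diag (t : T) :
    matrixFineGrading X ((0 : sumZero k), t) =
      Submodule.span F (Set.range fun i => single i i (X t : 𝔻)) := by
  rw [eq_span]
  congr 1
  ext m
  simp only [Set.mem_ofPred_eq, Set.mem_range, eq_comm (a := (0 : sumZero k)), root_eq_zero_iff]
  exact ⟨by rintro ⟨i, _, rfl, rfl⟩; exact ⟨i, rfl⟩, by rintro ⟨i, rfl⟩; exact ⟨i, i, rfl, rfl⟩⟩

theorem ne_bot_iff [NeZero ℓ] {g : sumZero k × T} :
    matrixFineGrading X g ≠ ⊥ ↔ ∃ i j, g.1 = root i j := by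
  refine ⟨fun h => by_contra fun hg => h ?_, fun ⟨i, j, h⟩ => ?_⟩
  · rw [eq_span, Submodule.span_eq_bot]
    rintro m ⟨i, j, h, -⟩
    exact (hg ⟨i, j, h⟩).elim
  · refine Submodule.ne_bot_iff _ |>.2 ⟨_, ?_, single_ne_zero i j (X g.2).ne_zero⟩
    simpa [← h] using single_mem X i j g.2

theorem mem_zero_iff {t : T} {P : Matrix (Fin k) (Fin k) 𝔻} :
    P ∈ matrixFineGrading X ((0 : sumZero k), t) ↔
      ∃ c : Fin k → F, P = diagonal fun i => c i • (X t : 𝔻) := by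
  simp only [eq_span_diag, Submodule.mem_span_range_iff_exists_fun, ← sum_single_eq_diagonal,
    smul_single, eq_comm (a := P)]

theorem diagonal_mem (t : T) :
    diagonal (fun _ => (X t : 𝔻)) ∈ matrixFineGrading X ((0 : sumZero k), t) :=
  mem_zero_iff.2 ⟨1, by simp⟩

theorem exists_eq_smul_single_of_mem {a b : Fin k} (hab : a ≠ b) {t : T}
    {m : Matrix (Fin k) (Fin k) 𝔻} (hm : m ∈ matrixFineGrading X (root a b, t)) :
    ∃ c : F, m = c • single a b (X t : 𝔻) := by
  rw [eq_span_single hab, Submodule.mem_span_singleton] at hm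
  exact hm.imp fun _ h => h.symm

theorem not_isUnit_of_mem_root [NeZero ℓ] {a b : Fin k} (hab : a ≠ b) {t : T}
    {m : Matrix (Fin k) (Fin k) 𝔻} (hm : m ∈ matrixFineGrading X (root a b, t)) : ¬IsUnit m := by
  have : Nonempty (Fin k) := ⟨a⟩
  obtain ⟨c, rfl⟩ := exists_eq_smul_single_of_mem hab hm
  intro hu
  have hsq : (c • single a b (X t : 𝔻)) * (c • single a b (X t : 𝔻)) = 0 := by
    rw [smul_mul_smul_comm, single_mul_single_of_ne (h := Ne.symm hab), smul_zero]
  exact not_isUnit_zero (hsq ▸ hu.mul hu)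

theorem mul_eq_smul_mul_of_mem_zero {β : T → T → Fˣ}
    (hcomm : ∀ u v, (X u : 𝔻) * X v = (β u v : F) • ((X v : 𝔻) * X u)) {u v : T}
    {P Q : Matrix (Fin k) (Fin k) 𝔻} (hP : P ∈ matrixFineGrading X ((0 : sumZero k), u))
    (hQ : Q ∈ matrixFineGrading X ((0 : sumZero k), v)) :
    P * Q = (β u v : F) • (Q * P) := by
  obtain ⟨c, rfl⟩ := mem_zero_iff.1 hP
  obtain ⟨d, rfl⟩ := mem_zero_iff.1 hQ
  rw [diagonal_mul_diagonal, diagonal_mul_diagonal, ← diagonal_smul]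
  congr 1
  ext i : 1
  simp only [smul_mul_smul_comm, hcomm u v, Pi.smul_apply, smul_smul, mul_comm]

theorem map_eq_of_map_single (ψ : Matrix (Fin k) (Fin k) 𝔻 →ₗ[F] Matrix (Fin k) (Fin k) 𝔻)
    {μ : AddAut (sumZero k × T)} {σ : Equiv.Perm (Fin k)} (hμ : ∀ p, (μ p).1 = permute σ p.1)
    (hψ : ∀ i j t, ∃ c : Fˣ,
      ψ (single i j (X t : 𝔻)) = (c : F) • single (σ i) (σ j) (X (μ (root i j, t)).2 : 𝔻))
    (g : sumZero k × T) :
    (matrixFineGrading X g).map ψ = matrixFineGrading X (μ g) := by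
  obtain ⟨x, t⟩ := g
  rw [eq_span, eq_span]
  refine Submodule.map_span_eq_of_units_smul ψ ?_ ?_
  · rintro _ ⟨i, j, rfl, rfl⟩
    obtain ⟨c, hc⟩ := hψ i j t
    exact ⟨c, _, ⟨σ i, σ j, by rw [hμ, permute_root], rfl⟩, hc⟩
  · rintro _ ⟨i, j, hij, rfl⟩
    have hx : x = root (σ.symm i) (σ.symm j) := by
      apply (permute σ).injective
      rw [permute_root, σ.apply_symm_apply, σ.apply_symm_apply, ← hij, hμ]
    subst hx
    obtain ⟨c, hc⟩ := hψ (σ.symm i) (σ.symm j) t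
    exact ⟨c, _, ⟨_, _, rfl, rfl⟩, by rwa [σ.apply_symm_apply, σ.apply_symm_apply] at hc⟩

theorem exists_algEquiv_map_single [IsAlgClosed F] [NeZero ℓ] (b : Module.Basis T F 𝔻)
    (hb : ∀ t, b t = X t) (hone : X 0 = 1)
    (hgrade : ∀ u v, ∃ c : Fˣ, (X u : 𝔻) * X v = (c : F) • (X (u + v) : 𝔻))
    {β : T → T → Fˣ} (hcomm : ∀ u v, (X u : 𝔻) * X v = (β u v : F) • ((X v : 𝔻) * X u))
    (π : AddAut T) (hπ : ∀ u v, β (π u) (π v) = β u v) (σ : Equiv.Perm (Fin k))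
    (s : Fin k → T) :
    ∃ ψ : Matrix (Fin k) (Fin k) 𝔻 ≃ₐ[F] Matrix (Fin k) (Fin k) 𝔻, ∀ i j t, ∃ c : Fˣ,
      ψ (single i j (X t : 𝔻)) =
        (c : F) • single (σ i) (σ j) (X (s (σ i) + π t - s (σ j)) : 𝔻) := by
  obtain ⟨φ, d, hφ⟩ := exists_algEquiv_map_eq_smul b hb hone hgrade hcomm π hπ
  let D := diagonalUnits fun i => X (s i)
  refine ⟨(reindexAlgEquiv F 𝔻 σ).trans (φ.mapMatrix.trans
    (MulSemiringAction.toAlgEquiv F _ (ConjAct.toConjAct D))), fun i j t => ?_⟩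
  obtain ⟨c, hc⟩ := exists_mul_mul_inv_eq_smul hone hgrade (s (σ i)) (π t) (s (σ j))
  refine ⟨d t * c, ?_⟩
  simp only [AlgEquiv.trans_apply, coe_reindexAlgEquiv, reindex_apply, submatrix_single_equiv,
    Equiv.symm_symm, AlgEquiv.mapMatrix_apply, map_single, hφ,
    MulSemiringAction.toAlgEquiv_apply, ConjAct.units_smul_def, ConjAct.ofConjAct_toConjAct]
  rw [show (D : Matrix (Fin k) (Fin k) 𝔻) = diagonal fun i => (X (s i) : 𝔻) from rfl,
    show ((D⁻¹ : (Matrix (Fin k) (Fin k) 𝔻)ˣ) : Matrix (Fin k) (Fin k) 𝔻)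
      = diagonal fun i => (↑(X (s i))⁻¹ : 𝔻) from rfl,
    diagonal_mul_single_mul_diagonal, mul_smul_comm, smul_mul_assoc, hc, smul_single, smul_smul,
    Units.val_mul]

def MapsComponents (X : T → 𝔻ˣ) (ψ : Matrix (Fin k) (Fin k) 𝔻 ≃ₐ[F] Matrix (Fin k) (Fin k) 𝔻)
    (μ : AddAut (sumZero k × T)) : Prop :=
  ∀ g, Submodule.map ψ.toLinearMap (matrixFineGrading X g) = matrixFineGrading X (μ g)

namespace MapsComponents

variable {ψ : Matrix (Fin k) (Fin k) (Matrix (Fin ℓ) (Fin ℓ) F) ≃ₐ[F]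
    Matrix (Fin k) (Fin k) (Matrix (Fin ℓ) (Fin ℓ) F)}
  {μ : AddAut (sumZero k × T)}

theorem symm (hψ : MapsComponents X ψ μ) : MapsComponents X ψ.symm μ.symm := fun g => by
  rw [← μ.apply_symm_apply g, ← hψ, ← Submodule.map_comp, μ.apply_symm_apply]
  convert Submodule.map_id _
  ext
  simp

theorem mem (hψ : MapsComponents X ψ μ) {g : sumZero k × T} {m : Matrix (Fin k) (Fin k) 𝔻}
    (hm : m ∈ matrixFineGrading X g) : ψ m ∈ matrixFineGrading X (μ g) :=
  hψ g ▸ Submodule.mem_map_of_mem hm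

variable [NeZero ℓ]

theorem fst_apply_zero [NeZero k] (hψ : MapsComponents X ψ μ) (t : T) : (μ (0, t)).1 = 0 := by
  have hu : IsUnit (ψ (diagonal fun _ => (X t : 𝔻))) := (diagonalUnits fun _ => X t).isUnit.map ψ
  have hmem := hψ.mem (diagonal_mem (X := X) t)
  obtain ⟨a, b, hab⟩ := ne_bot_iff.1 ((Submodule.ne_bot_iff _).2 ⟨_, hmem, hu.ne_zero⟩)
  rcases eq_or_ne a b with rfl | hne
  · rw [hab, root_self]
  · rw [← Prod.mk.eta (p := μ (0, t)), hab] at hmem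
    exact (not_isUnit_of_mem_root hne hmem hu).elim

theorem exists_fst_apply_root (hψ : MapsComponents X ψ μ) (i j : Fin k) :
    ∃ a b, (μ (root i j, 0)).1 = root a b :=
  ne_bot_iff.1 <| (Submodule.ne_bot_iff _).2 ⟨_, hψ.mem (single_mem X i j 0),
    (map_ne_zero_iff _ ψ.injective).2 (single_ne_zero i j (X 0).ne_zero)⟩

theorem fst_apply_root_ne_zero [NeZero k] (hψ : MapsComponents X ψ μ) {i j : Fin k}
    (hij : i ≠ j) : (μ (root i j, 0)).1 ≠ 0 := fun h => hij <| root_eq_zero_iff.1 <| by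
  have := congrArg (fun p => (μ.symm p).1) (Prod.ext h rfl : μ (root i j, 0) = (0, _))
  rwa [AddEquiv.symm_apply_apply, hψ.symm.fst_apply_zero] at this

theorem snd_eq_fst_of_fst_apply_root (hψ : MapsComponents X ψ μ) {i j l a b a' b' : Fin k}
    (hab : a ≠ b) (hab' : a' ≠ b') (h₁ : (μ (root i j, 0)).1 = root a b)
    (h₂ : (μ (root j l, 0)).1 = root a' b') : b = a' := by
  by_contra h
  obtain ⟨c, hc⟩ := exists_eq_smul_single_of_mem hab (by
    rw [← h₁]; exact hψ.mem (single_mem X i j 0))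
  obtain ⟨c', hc'⟩ := exists_eq_smul_single_of_mem hab' (by
    rw [← h₂]; exact hψ.mem (single_mem X j l 0))
  have hprod := congrArg ψ (single_mul_single_same (c := (X 0 : 𝔻)) i j l (X 0 : 𝔻))
  rw [map_mul, hc, hc', smul_mul_smul_comm, single_mul_single_of_ne (h := h), smul_zero] at hprod
  exact single_ne_zero i l (X 0 * X 0).ne_zero (ψ.injective (hprod.symm.trans (map_zero ψ).symm))

theorem exists_perm_fst_apply [NeZero k] (hψ : MapsComponents X ψ μ) :
    ∃ σ : Equiv.Perm (Fin k), ∀ p, (μ p).1 = permute σ p.1 := by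
  choose a b hμ using hψ.exists_fst_apply_root
  have hab (i j : Fin k) (hij : i ≠ j) : a i j ≠ b i j := fun h =>
    hψ.fst_apply_root_ne_zero hij (by rw [hμ, h, root_self])
  obtain ⟨σ, hσ⟩ := Equiv.Perm.exists_of_chain a b hab fun i j l hij hjl =>
    hψ.snd_eq_fst_of_fst_apply_root (hab i j hij) (hab j l hjl) (hμ i j) (hμ j l)
  have hroot : (AddMonoidHom.fst _ _).comp (μ.toAddMonoidHom.comp (AddMonoidHom.inl _ T)) =
      (permute σ).toAddMonoidHom := hom_ext fun i j => by
    rcases eq_or_ne i j with rfl | hij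
    · simp only [root_self, map_zero]
    · simp [hμ, (hσ i j hij).1, (hσ i j hij).2, permute_root]
  refine ⟨σ, fun p => ?_⟩
  have hp : μ p = μ (p.1, 0) + μ (0, p.2) := by rw [← map_add, Prod.mk_add_mk, add_zero, zero_add]
  rw [hp, Prod.fst_add, hψ.fst_apply_zero, add_zero]
  exact DFunLike.congr_fun hroot p.1

theorem bicharacter_apply_eq [NeZero k] {β : T → T → Fˣ}
    (hcomm : ∀ u v, (X u : 𝔻) * X v = (β u v : F) • ((X v : 𝔻) * X u))
    (hψ : MapsComponents X ψ μ) {π : AddAut T} (hπ : ∀ t, μ (0, t) = (0, π t)) (u v : T) :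
    β (π u) (π v) = β u v := by
  let D (t : T) := diagonal fun _ : Fin k => (X t : 𝔻)
  have hmem (t : T) : ψ (D t) ∈ matrixFineGrading X ((0 : sumZero k), π t) :=
    hπ t ▸ hψ.mem (diagonal_mem t)
  have hne : ψ (D v) * ψ (D u) ≠ 0 := by
    rw [← map_mul]
    exact ((diagonalUnits fun _ => X v) * diagonalUnits fun _ => X u).isUnit.map ψ |>.ne_zero
  have h₁ := mul_eq_smul_mul_of_mem_zero hcomm (hmem u) (hmem v)
  have h₂ : ψ (D u) * ψ (D v) = (β u v : F) • (ψ (D v) * ψ (D u)) := by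
    rw [← map_mul, ← map_mul, mul_eq_smul_mul_of_mem_zero hcomm (diagonal_mem u) (diagonal_mem v),
      map_smul]
  exact Units.ext (smul_left_injective F hne (h₁.symm.trans h₂))

end MapsComponents

theorem mem_range_weylHom_iff [IsAlgClosed F] [NeZero ℓ] [NeZero k] (b : Module.Basis T F 𝔻)
    (hb : ∀ t, b t = X t) (hone : X 0 = 1)
    (hgrade : ∀ u v, ∃ c : Fˣ, (X u : 𝔻) * X v = (c : F) • (X (u + v) : 𝔻))
    {β : T → T → Fˣ} (hcomm : ∀ u v, (X u : 𝔻) * X v = (β u v : F) • ((X v : 𝔻) * X u))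
    (μ : AddAut (sumZero k × T)) :
    μ ∈ (weylHom k (bicharacterAut β)).range ↔ ∃ ψ, MapsComponents X ψ μ := by
  constructor
  · rintro ⟨⟨f, ⟨π, hπ⟩, σ⟩, rfl⟩
    obtain ⟨s, rfl⟩ := pairing_surjective f.toAdd
    obtain ⟨ψ, hψ⟩ := exists_algEquiv_map_single b hb hone hgrade hcomm π hπ σ s
    refine ⟨ψ, map_eq_of_map_single ψ.toLinearMap (σ := σ) (fun p => rfl) fun i j t => ?_⟩
    obtain ⟨c, hc⟩ := hψ i j t
    refine ⟨c, hc.trans ?_⟩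
    simp only [AddAut.affineHom_apply, weylLinearPart_apply, permute_root]
    change _ = _ • single (σ i) (σ j) (X (π t + pairing s (root (σ i) (σ j))) : 𝔻)
    rw [pairing_root, add_sub_assoc', add_comm (s _)]
  · rintro ⟨ψ, hψ⟩
    obtain ⟨π, hπ⟩ := μ.exists_apply_zero_eq hψ.fst_apply_zero hψ.symm.fst_apply_zero
    obtain ⟨σ, hσ⟩ := hψ.exists_perm_fst_apply
    exact AddAut.mem_range_affineHom (⟨π, hψ.bicharacter_apply_eq hcomm hπ⟩, σ) hπ
      fun x => hσ (x, 0)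

end MatrixFineGrading

theorem weyl_group_of_fine_grading_on_matrix_algebra_general
    {F : Type*} [Field F] [IsAlgClosed F] {ℓ k : ℕ} (hℓ : 0 < ℓ) (hk : 0 < k)
    {T : Type*} [AddCommGroup T]
    (X : T → (Matrix (Fin ℓ) (Fin ℓ) F)ˣ)
    (b : Module.Basis T F (Matrix (Fin ℓ) (Fin ℓ) F))
    (hb : ∀ t : T, b t = (X t : Matrix (Fin ℓ) (Fin ℓ) F))
    (hone : X 0 = 1)
    (hgrade : ∀ u v : T, ∃ c : Fˣ,
      (X u : Matrix (Fin ℓ) (Fin ℓ) F) * (X v : Matrix (Fin ℓ) (Fin ℓ) F)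
        = (c : F) • (X (u + v) : Matrix (Fin ℓ) (Fin ℓ) F))
    (β : T → T → Fˣ)
    (hcomm : ∀ u v : T,
      (X u : Matrix (Fin ℓ) (Fin ℓ) F) * (X v : Matrix (Fin ℓ) (Fin ℓ) F)
        = (β u v : F) • ((X v : Matrix (Fin ℓ) (Fin ℓ) F) * (X u : Matrix (Fin ℓ) (Fin ℓ) F))) :
    ∃ (W : Subgroup (AddAut (↥(sumZero k) × T))) (B : Subgroup (AddAut T)),
      -- B is the group Aut(T,β)
      (∀ π : AddAut T, π ∈ B ↔ ∀ u v : T, β (π u) (π v) = β u v) ∧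
      -- W is the Weyl group of Γ_M(D,k), acting on the universal group ℤ₀^k × T
      (∀ μ : AddAut (↥(sumZero k) × T), μ ∈ W ↔
        ∃ ψ : Matrix (Fin k) (Fin k) (Matrix (Fin ℓ) (Fin ℓ) F)
              ≃ₐ[F] Matrix (Fin k) (Fin k) (Matrix (Fin ℓ) (Fin ℓ) F),
          ∀ g, Submodule.map ψ.toLinearMap (matrixFineGrading X g)
                 = matrixFineGrading X (μ g)) ∧
      -- W ≅ (T^k/T) ⋊ (Aut(T,β) × Sym(k)), as an internal semidirect product
      (∃ N H : Subgroup ↥W, N.Normal ∧ N ⊓ H = ⊥ ∧ N ⊔ H = ⊤ ∧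
        Nonempty (↥N ≃* Multiplicative
          ((Fin k → T) ⧸ (AddMonoidHom.range
            (AddMonoidHom.mk' (fun t => (fun _ : Fin k => t)) (fun _ _ => rfl))))) ∧
        Nonempty (↥H ≃* ↥B × Equiv.Perm (Fin k))) := by
  have : NeZero ℓ := ⟨hℓ.ne'⟩
  have : NeZero k := ⟨hk.ne'⟩
  obtain ⟨N, H, hN, hinf, hsup, ⟨eN⟩, ⟨eH⟩⟩ := SemidirectProduct.exists_normal_complement
    (MonoidHom.ofInjective
      (AddAut.affineHom_injective (weylLinearPart_injective k (bicharacterAut β))))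
  exact ⟨_, bicharacterAut β, fun _ => Iff.rfl,
    fun μ => MatrixFineGrading.mem_range_weylHom_iff b hb hone hgrade hcomm μ, N, H, hN, hinf, hsup,
    ⟨eN.trans (AddEquiv.toMultiplicative (sumZero.quotientDiagonalEquiv k T).symm)⟩, ⟨eH⟩⟩

/-- The Weyl group of the fine grading `Γ_M(D,k)` on `M_n(F)`, `n = kℓ`, is isomorphic to
`T^{k-1} ⋊ (Aut(T,β) × Sym(k))`, where `T^{k-1} = T^k/T` (`T` embedded diagonally):
it decomposes internally as a semidirect product of a normal subgroup isomorphic to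
`T^k/T` and a complement isomorphic to `Aut(T,β) × Sym(k)`. -/
theorem weyl_group_of_fine_grading_on_matrix_algebra
    {F : Type*} [Field F] [IsAlgClosed F] {ℓ k : ℕ} (hℓ : 0 < ℓ) (hk : 0 < k)
    {T : Type*} [AddCommGroup T] [Fintype T]
    (X : T → (Matrix (Fin ℓ) (Fin ℓ) F)ˣ)
    (b : Module.Basis T F (Matrix (Fin ℓ) (Fin ℓ) F))
    (hb : ∀ t : T, b t = (X t : Matrix (Fin ℓ) (Fin ℓ) F))
    (hone : X 0 = 1)
    (hgrade : ∀ u v : T, ∃ c : Fˣ,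
      (X u : Matrix (Fin ℓ) (Fin ℓ) F) * (X v : Matrix (Fin ℓ) (Fin ℓ) F)
        = (c : F) • (X (u + v) : Matrix (Fin ℓ) (Fin ℓ) F))
    (β : T → T → Fˣ)
    (hcomm : ∀ u v : T,
      (X u : Matrix (Fin ℓ) (Fin ℓ) F) * (X v : Matrix (Fin ℓ) (Fin ℓ) F)
        = (β u v : F) • ((X v : Matrix (Fin ℓ) (Fin ℓ) F) * (X u : Matrix (Fin ℓ) (Fin ℓ) F)))
    (hnondeg : ∀ u : T, (∀ v : T, β u v = 1) → u = 0) :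
    ∃ (W : Subgroup (AddAut (↥(sumZero k) × T))) (B : Subgroup (AddAut T)),
      -- B is the group Aut(T,β)
      (∀ π : AddAut T, π ∈ B ↔ ∀ u v : T, β (π u) (π v) = β u v) ∧
      -- W is the Weyl group of Γ_M(D,k), acting on the universal group ℤ₀^k × T
      (∀ μ : AddAut (↥(sumZero k) × T), μ ∈ W ↔
        ∃ ψ : Matrix (Fin k) (Fin k) (Matrix (Fin ℓ) (Fin ℓ) F)
              ≃ₐ[F] Matrix (Fin k) (Fin k) (Matrix (Fin ℓ) (Fin ℓ) F),
          ∀ g, Submodule.map ψ.toLinearMap (matrixFineGrading X g)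
                 = matrixFineGrading X (μ g)) ∧
      -- W ≅ (T^k/T) ⋊ (Aut(T,β) × Sym(k)), as an internal semidirect product
      (∃ N H : Subgroup ↥W, N.Normal ∧ N ⊓ H = ⊥ ∧ N ⊔ H = ⊤ ∧
        Nonempty (↥N ≃* Multiplicative
          ((Fin k → T) ⧸ (AddMonoidHom.range
            (AddMonoidHom.mk' (fun t => (fun _ : Fin k => t)) (fun _ _ => rfl))))) ∧
        Nonempty (↥H ≃* ↥B × Equiv.Perm (Fin k))) :=
  weyl_group_of_fine_grading_on_matrix_algebra_general hℓ hk X b hb hone hgrade β hcomm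
end

section
/- Let Γ be the Cartan grading on the Cayley algebra C over an algebraically closed field. Then the Weyl group W(Γ) = Aut(Γ)/Stab(Γ) is isomorphic to the dihedral group of order 12 (the automorphism group of the root system G₂). -/
/-- Degrees of `u₁, u₂, u₃` in the Cartan grading of the Cayley algebra. -/
def octDeg : Fin 3 → ℤ × ℤ := ![(1, 0), (0, 1), (-1, -1)]

/-- The Cartan `ℤ²`-grading on the Cayley algebra determined by a good basis. -/
def cartanOct {F : Type*} [Field F] {C : Type*} [NonAssocRing C] [Module F C]
    (e₁ e₂ : C) (u v : Fin 3 → C) : ℤ × ℤ → Submodule F C :=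
  fun g =>
    (if g = 0 then Submodule.span F {e₁, e₂} else ⊥) ⊔
    (⨆ i : Fin 3, if g = octDeg i then F ∙ u i else ⊥) ⊔
    (⨆ i : Fin 3, if g = -octDeg i then F ∙ v i else ⊥)

/-!
A graded automorphism permutes the nonzero degrees of the grading, which form the hexagon
`±(1,0), ±(0,1), ±(1,1)`, and an automorphism of `ℤ²` is determined by the images of `(1,0)` and
`(0,1)`; so `W(Γ)` embeds into the 12-element symmetry group of the hexagon.
Conversely, the relations of a good basis are preserved by `e₁ ↔ e₂, uᵢ ↦ vᵢ₊₁, vᵢ ↦ uᵢ₊₁` and by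
`uᵢ ↦ -u₋ᵢ, vᵢ ↦ -v₋ᵢ`; the linear maps realizing these substitutions are automorphisms of `C`
inducing on `ℤ²` the rotation of order 6 and a reflection, which generate the dihedral group.
-/

open Multiplicative

namespace DihedralGroup

variable {G : Type*} [Group G] {n : ℕ} [NeZero n]

def lift (a b : G) (ha : a ^ n = 1) (hb : b * b = 1) (hab : a * b = b * a⁻¹) :
    DihedralGroup n →* G where
  toFun
    | r i => a ^ i.val
    | sr i => b * a ^ i.val
  map_one' := show a ^ (0 : ZMod n).val = 1 by rw [ZMod.val_zero, pow_zero]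
  map_mul' := by
    have pow_val_add (i j : ZMod n) : a ^ (i + j).val = a ^ i.val * a ^ j.val := by
      rw [ZMod.val_add, ← pow_eq_pow_mod _ ha, pow_add]
    have pow_val_mul (i : ZMod n) : a ^ i.val * b = b * a ^ (-i).val := by
      have hneg : a ^ (-i).val = (a ^ i.val)⁻¹ := eq_inv_of_mul_eq_one_left <| by
        rw [← pow_val_add, neg_add_cancel, ZMod.val_zero, pow_zero]
      rw [hneg, ← inv_pow]
      exact ((show SemiconjBy b a⁻¹ a from hab.symm).pow_right i.val).eq.symm
    rintro (i | i) (j | j) <;> simp only [r_mul_r, r_mul_sr, sr_mul_r, sr_mul_sr]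
    · exact pow_val_add i j
    · show b * a ^ (j - i).val = a ^ i.val * (b * a ^ j.val)
      rw [← mul_assoc, pow_val_mul, mul_assoc, ← pow_val_add, neg_add_eq_sub]
    · show b * a ^ (i + j).val = b * a ^ i.val * a ^ j.val
      rw [mul_assoc, pow_val_add]
    · show a ^ (j - i).val = b * a ^ i.val * (b * a ^ j.val)
      rw [mul_assoc, ← mul_assoc (a ^ i.val), pow_val_mul, ← mul_assoc, ← mul_assoc, hb, one_mul,
        ← pow_val_add, neg_add_eq_sub]

theorem range_lift_le {a b : G} {ha : a ^ n = 1} {hb : b * b = 1} {hab : a * b = b * a⁻¹}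
    {H : Subgroup G} (haH : a ∈ H) (hbH : b ∈ H) : (lift a b ha hb hab).range ≤ H := by
  rintro _ ⟨i | i, rfl⟩
  exacts [H.pow_mem haH _, H.mul_mem hbH (H.pow_mem haH _)]

end DihedralGroup

section WeylGroup

variable {F C M : Type*} [Semiring F] [AddCommMonoid C] [Mul C] [Module F C] [Add M]

/-- The image of `Aut(Γ)` in `Aut(M)`, i.e. the Weyl group `Aut(Γ) / Stab(Γ)` of the grading `Γ`. -/
def weylGroup (Γ : M → Submodule F C) : Subgroup (Multiplicative (AddAut M)) where
  carrier := {μ | ∃ ψ : C ≃ₗ[F] C, (∀ x y : C, ψ (x * y) = ψ x * ψ y) ∧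
    ∀ g, (Γ g).map (ψ : C →ₗ[F] C) = Γ (toAdd μ g)}
  one_mem' := ⟨LinearEquiv.refl F C, fun _ _ => rfl, fun g => Submodule.map_id _⟩
  mul_mem' := by
    rintro μ ν ⟨ψ, hψ, hψΓ⟩ ⟨χ, hχ, hχΓ⟩
    refine ⟨χ.trans ψ, fun x y => by simp [hχ, hψ], fun g => ?_⟩
    rw [LinearEquiv.coe_trans, Submodule.map_comp, hχΓ, hψΓ]
    rfl
  inv_mem' := by
    rintro μ ⟨ψ, hψ, hψΓ⟩
    refine ⟨ψ.symm, fun x y => ψ.injective (by simp [hψ]), fun g => ?_⟩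
    exact (Submodule.map_symm_eq_iff ψ).mpr
      ((hψΓ _).trans (congrArg Γ ((toAdd μ).apply_symm_apply g)))

theorem apply_ne_bot_of_mem_weylGroup {Γ : M → Submodule F C} {μ : Multiplicative (AddAut M)}
    (hμ : μ ∈ weylGroup Γ) {g : M} (hg : Γ g ≠ ⊥) : Γ (toAdd μ g) ≠ ⊥ := by
  obtain ⟨ψ, -, hψΓ⟩ := hμ
  exact hψΓ g ▸ Submodule.map_ne_bot_iff.mpr hg

end WeylGroup

def octShift : AddAut (ℤ × ℤ) where
  toFun p := (-p.2, p.1 - p.2)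
  invFun p := (p.2 - p.1, -p.1)
  left_inv p := by ext <;> simp
  right_inv p := by ext <;> simp
  map_add' p q := by ext <;> simp <;> abel

def octReflection : AddAut (ℤ × ℤ) where
  toFun p := (p.1 - p.2, -p.2)
  invFun p := (p.1 - p.2, -p.2)
  left_inv p := by ext <;> simp
  right_inv p := by ext <;> simp
  map_add' p q := by ext <;> simp <;> abel

def octRotation : AddAut (ℤ × ℤ) := (AddEquiv.neg (ℤ × ℤ)).trans octShift

theorem octShift_octDeg : ∀ i, octShift (octDeg i) = octDeg (i + 1) := by decide

theorem octReflection_octDeg : ∀ i, octReflection (octDeg i) = octDeg (-i) := by decide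

theorem AddAut.ext_int_prod {μ ν : AddAut (ℤ × ℤ)} (h₁ : μ (1, 0) = ν (1, 0))
    (h₂ : μ (0, 1) = ν (0, 1)) : μ = ν := by
  refine AddEquiv.ext fun p => ?_
  have hp : p = p.1 • ((1 : ℤ), (0 : ℤ)) + p.2 • ((0 : ℤ), (1 : ℤ)) := by simp
  rw [hp, map_add, map_add, map_zsmul, map_zsmul, map_zsmul, map_zsmul, h₁, h₂]

def octRoots : Finset (ℤ × ℤ) := Finset.univ.image octDeg ∪ Finset.univ.image (-octDeg)

def octWeylHom : DihedralGroup 6 →* Multiplicative (AddAut (ℤ × ℤ)) :=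
  DihedralGroup.lift (ofAdd octRotation) (ofAdd octReflection)
    (toAdd.injective <| AddAut.ext_int_prod (by decide) (by decide))
    (toAdd.injective <| AddAut.ext_int_prod (by decide) (by decide))
    (toAdd.injective <| AddAut.ext_int_prod (by decide) (by decide))

theorem octWeylHom_injective : Function.Injective octWeylHom := by
  have key : ∀ d, toAdd (octWeylHom d) (octDeg 0) = octDeg 0 →
      toAdd (octWeylHom d) (octDeg 1) = octDeg 1 → d = 1 := by
    decide
  refine (injective_iff_map_eq_one _).mpr fun d hd => key d ?_ ?_ <;> rw [hd] <;> rfl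

theorem exists_octWeylHom_apply_eq {a b : ℤ × ℤ} (ha : a ∈ octRoots) (hb : b ∈ octRoots)
    (hab : a + b ∈ octRoots) :
    ∃ d, toAdd (octWeylHom d) (octDeg 0) = a ∧ toAdd (octWeylHom d) (octDeg 1) = b := by
  have key : ∀ a ∈ octRoots, ∀ b ∈ octRoots, a + b ∈ octRoots →
      ∃ d, toAdd (octWeylHom d) (octDeg 0) = a ∧ toAdd (octWeylHom d) (octDeg 1) = b := by
    decide
  exact key a ha b hb hab

theorem Fin.three_cases (i j : Fin 3) : j = i ∨ j = i + 1 ∨ i = j + 1 := by decide +revert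

def octFamily {C : Type*} (e₁ e₂ : C) (u v : Fin 3 → C) : Fin 2 ⊕ Fin 3 ⊕ Fin 3 → C :=
  Sum.elim ![e₁, e₂] (Sum.elim u v)

section GoodBasis

variable {C : Type*} [NonAssocRing C] {e₁ e₂ : C} {u v : Fin 3 → C}

structure GoodBasisRelations (e₁ e₂ : C) (u v : Fin 3 → C) : Prop where
  e₁_mul_e₁ : e₁ * e₁ = e₁
  e₂_mul_e₂ : e₂ * e₂ = e₂
  e₁_mul_e₂ : e₁ * e₂ = 0
  e₂_mul_e₁ : e₂ * e₁ = 0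
  e₁_mul_u : ∀ i, e₁ * u i = u i
  u_mul_e₂ : ∀ i, u i * e₂ = u i
  u_mul_e₁ : ∀ i, u i * e₁ = 0
  e₂_mul_u : ∀ i, e₂ * u i = 0
  e₂_mul_v : ∀ i, e₂ * v i = v i
  v_mul_e₁ : ∀ i, v i * e₁ = v i
  v_mul_e₂ : ∀ i, v i * e₂ = 0
  e₁_mul_v : ∀ i, e₁ * v i = 0
  u_mul_u_add_one : ∀ i, u i * u (i + 1) = v (i + 2)
  u_add_one_mul_u : ∀ i, u (i + 1) * u i = -v (i + 2)
  v_mul_v_add_one : ∀ i, v i * v (i + 1) = u (i + 2)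
  v_add_one_mul_v : ∀ i, v (i + 1) * v i = -u (i + 2)
  u_mul_v_self : ∀ i, u i * v i = -e₁
  v_mul_u_self : ∀ i, v i * u i = -e₂
  u_mul_v_of_ne : ∀ i j, i ≠ j → u i * v j = 0
  v_mul_u_of_ne : ∀ i j, i ≠ j → v i * u j = 0
  u_mul_u_self : ∀ i, u i * u i = 0
  v_mul_v_self : ∀ i, v i * v i = 0

namespace GoodBasisRelations

theorem swap (h : GoodBasisRelations e₁ e₂ u v) : GoodBasisRelations e₂ e₁ v u :=
  ⟨h.e₂_mul_e₂, h.e₁_mul_e₁, h.e₂_mul_e₁, h.e₁_mul_e₂, h.e₂_mul_v, h.v_mul_e₁, h.v_mul_e₂,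
    h.e₁_mul_v, h.e₁_mul_u, h.u_mul_e₂, h.u_mul_e₁, h.e₂_mul_u, h.v_mul_v_add_one,
    h.v_add_one_mul_v, h.u_mul_u_add_one, h.u_add_one_mul_u, h.v_mul_u_self, h.u_mul_v_self,
    h.v_mul_u_of_ne, h.u_mul_v_of_ne, h.v_mul_v_self, h.u_mul_u_self⟩

theorem shift (h : GoodBasisRelations e₁ e₂ u v) (k : Fin 3) :
    GoodBasisRelations e₁ e₂ (fun i => u (i + k)) (fun i => v (i + k)) := by
  have hk (i j : Fin 3) : i + j + k = i + k + j := add_right_comm i j k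
  refine ⟨h.e₁_mul_e₁, h.e₂_mul_e₂, h.e₁_mul_e₂, h.e₂_mul_e₁, fun i => h.e₁_mul_u _,
    fun i => h.u_mul_e₂ _, fun i => h.u_mul_e₁ _, fun i => h.e₂_mul_u _, fun i => h.e₂_mul_v _,
    fun i => h.v_mul_e₁ _, fun i => h.v_mul_e₂ _, fun i => h.e₁_mul_v _, fun i => ?_, fun i => ?_,
    fun i => ?_, fun i => ?_, fun i => h.u_mul_v_self _, fun i => h.v_mul_u_self _,
    fun i j hij => h.u_mul_v_of_ne _ _ (by simpa using hij),
    fun i j hij => h.v_mul_u_of_ne _ _ (by simpa using hij),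
    fun i => h.u_mul_u_self _, fun i => h.v_mul_v_self _⟩ <;>
  simp only [hk]
  exacts [h.u_mul_u_add_one _, h.u_add_one_mul_u _, h.v_mul_v_add_one _, h.v_add_one_mul_v _]

theorem reflect (h : GoodBasisRelations e₁ e₂ u v) :
    GoodBasisRelations e₁ e₂ (fun i => -u (-i)) (fun i => -v (-i)) := by
  have neg_add_one : ∀ i : Fin 3, -(i + 1) + 1 = -i := by decide
  have neg_add_two : ∀ i : Fin 3, -(i + 1) + 2 = -(i + 2) := by decide
  refine ⟨h.e₁_mul_e₁, h.e₂_mul_e₂, h.e₁_mul_e₂, h.e₂_mul_e₁, fun i => ?_, fun i => ?_,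
    fun i => ?_, fun i => ?_, fun i => ?_, fun i => ?_, fun i => ?_, fun i => ?_, fun i => ?_,
    fun i => ?_, fun i => ?_, fun i => ?_, fun i => ?_, fun i => ?_, fun i j hij => ?_,
    fun i j hij => ?_, fun i => ?_, fun i => ?_⟩ <;>
  simp only [neg_mul, mul_neg, neg_neg, neg_inj, neg_eq_zero]
  · exact h.e₁_mul_u _
  · exact h.u_mul_e₂ _
  · exact h.u_mul_e₁ _
  · exact h.e₂_mul_u _
  · exact h.e₂_mul_v _
  · exact h.v_mul_e₁ _
  · exact h.v_mul_e₂ _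
  · exact h.e₁_mul_v _
  · rw [← neg_add_one i, h.u_add_one_mul_u, neg_add_two]
  · rw [← neg_add_one i, h.u_mul_u_add_one, neg_add_two]
  · rw [← neg_add_one i, h.v_add_one_mul_v, neg_add_two]
  · rw [← neg_add_one i, h.v_mul_v_add_one, neg_add_two]
  · exact h.u_mul_v_self _
  · exact h.v_mul_u_self _
  · exact h.u_mul_v_of_ne _ _ (neg_injective.ne hij)
  · exact h.v_mul_u_of_ne _ _ (neg_injective.ne hij)
  · exact h.u_mul_u_self _
  · exact h.v_mul_v_self _

theorem map_mul {F : Type*} [CommSemiring F] [Module F C] [SMulCommClass F C C]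
    [IsScalarTower F C C] {b : Module.Basis (Fin 2 ⊕ Fin 3 ⊕ Fin 3) F C}
    (hb : ⇑b = octFamily e₁ e₂ u v) (h : GoodBasisRelations e₁ e₂ u v) {ψ : C →ₗ[F] C}
    (hψ : GoodBasisRelations (ψ e₁) (ψ e₂) (fun i => ψ (u i)) (fun i => ψ (v i))) (x y : C) :
    ψ (x * y) = ψ x * ψ y := by
  suffices (LinearMap.mul F C).compr₂ ψ = (LinearMap.mul F C).compl₁₂ ψ ψ from
    LinearMap.congr_fun₂ this x y
  refine LinearMap.ext_basis b b fun j k => ?_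
  simp only [LinearMap.compr₂_apply, LinearMap.compl₁₂_apply, LinearMap.mul_apply', hb]
  rcases j with a | i | i <;> rcases k with c | l | l <;>
    simp only [octFamily, Sum.elim_inl, Sum.elim_inr]
  · fin_cases a <;> fin_cases c <;>
      simp [h.e₁_mul_e₁, h.e₂_mul_e₂, h.e₁_mul_e₂, h.e₂_mul_e₁, hψ.e₁_mul_e₁, hψ.e₂_mul_e₂,
        hψ.e₁_mul_e₂, hψ.e₂_mul_e₁]
  · fin_cases a <;> simp [h.e₁_mul_u, h.e₂_mul_u, hψ.e₁_mul_u, hψ.e₂_mul_u]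
  · fin_cases a <;> simp [h.e₁_mul_v, h.e₂_mul_v, hψ.e₁_mul_v, hψ.e₂_mul_v]
  · fin_cases c <;> simp [h.u_mul_e₁, h.u_mul_e₂, hψ.u_mul_e₁, hψ.u_mul_e₂]
  · rcases Fin.three_cases i l with rfl | rfl | rfl
    · simp [h.u_mul_u_self, hψ.u_mul_u_self]
    · simp [h.u_mul_u_add_one, hψ.u_mul_u_add_one]
    · simp [h.u_add_one_mul_u, hψ.u_add_one_mul_u]
  · rcases eq_or_ne i l with rfl | hil
    · simp [h.u_mul_v_self, hψ.u_mul_v_self]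
    · simp [h.u_mul_v_of_ne _ _ hil, hψ.u_mul_v_of_ne _ _ hil]
  · fin_cases c <;> simp [h.v_mul_e₁, h.v_mul_e₂, hψ.v_mul_e₁, hψ.v_mul_e₂]
  · rcases eq_or_ne i l with rfl | hil
    · simp [h.v_mul_u_self, hψ.v_mul_u_self]
    · simp [h.v_mul_u_of_ne _ _ hil, hψ.v_mul_u_of_ne _ _ hil]
  · rcases Fin.three_cases i l with rfl | rfl | rfl
    · simp [h.v_mul_v_self, hψ.v_mul_v_self]
    · simp [h.v_mul_v_add_one, hψ.v_mul_v_add_one]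
    · simp [h.v_add_one_mul_v, hψ.v_add_one_mul_v]

end GoodBasisRelations

end GoodBasis

section CartanGrading

variable {F : Type*} [Field F] {C : Type*} [NonAssocRing C] [Module F C] {e₁ e₂ : C}
  {u v : Fin 3 → C}

theorem map_cartanOct (ψ : C →ₗ[F] C) (g : ℤ × ℤ) :
    (cartanOct e₁ e₂ u v g).map ψ =
      cartanOct (ψ e₁) (ψ e₂) (fun i => ψ (u i)) (fun i => ψ (v i)) g := by
  simp only [cartanOct, Submodule.map_sup, Submodule.map_iSup, apply_ite (Submodule.map ψ),
    Submodule.map_bot, Submodule.map_span, Set.image_pair, Set.image_singleton]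

theorem cartanOct_swap (g : ℤ × ℤ) :
    cartanOct (F := F) e₂ e₁ v u g = cartanOct e₁ e₂ u v (-g) := by
  simp only [cartanOct, neg_eq_iff_eq_neg, neg_neg, neg_zero, Set.pair_comm e₂ e₁]
  exact sup_right_comm _ _ _

theorem cartanOct_neg (g : ℤ × ℤ) :
    cartanOct (F := F) e₁ e₂ (fun i => -u i) (fun i => -v i) g = cartanOct e₁ e₂ u v g := by
  simp only [cartanOct, ← Set.neg_singleton, Submodule.span_neg]

theorem cartanOct_comp_perm (π : Equiv.Perm (Fin 3)) {μ : AddAut (ℤ × ℤ)}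
    (hμ : ∀ i, μ (octDeg i) = octDeg (π i)) (g : ℤ × ℤ) :
    cartanOct (F := F) e₁ e₂ (fun i => u (π i)) (fun i => v (π i)) g =
      cartanOct e₁ e₂ u v (μ g) := by
  simp only [cartanOct, ← π.iSup_comp (g := fun i => if μ g = octDeg i then _ else _),
    ← π.iSup_comp (g := fun i => if μ g = -octDeg i then _ else _), ← hμ, ← map_neg,
    EmbeddingLike.apply_eq_iff_eq, AddEquiv.map_eq_zero_iff]

theorem cartanOct_octDeg_ne_bot {i : Fin 3} (hu : u i ≠ 0) :
    cartanOct (F := F) e₁ e₂ u v (octDeg i) ≠ ⊥ := by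
  refine Submodule.ne_bot_iff _ |>.mpr ⟨u i, ?_, hu⟩
  refine Submodule.mem_sup_left <| Submodule.mem_sup_right <| Submodule.mem_iSup_of_mem i ?_
  simp

theorem cartanOct_neg_octDeg_ne_bot {i : Fin 3} (hv : v i ≠ 0) :
    cartanOct (F := F) e₁ e₂ u v (-octDeg i) ≠ ⊥ := by
  refine Submodule.ne_bot_iff _ |>.mpr ⟨v i, ?_, hv⟩
  refine Submodule.mem_sup_right <| Submodule.mem_iSup_of_mem i ?_
  simp

theorem mem_octRoots_of_cartanOct_ne_bot {g : ℤ × ℤ}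
    (hg : cartanOct (F := F) e₁ e₂ u v g ≠ ⊥) (hg0 : g ≠ 0) : g ∈ octRoots := by
  contrapose! hg
  have hu (i : Fin 3) : g ≠ octDeg i := fun hi => hg (by simp [octRoots, hi])
  have hv (i : Fin 3) : g ≠ -octDeg i := fun hi => hg (by simp [octRoots, hi])
  simp [cartanOct, hg0, hu, hv]

theorem weylGroup_cartanOct_le_range (hu : ∀ i, u i ≠ 0) (hv : ∀ i, v i ≠ 0) :
    weylGroup (cartanOct (F := F) e₁ e₂ u v) ≤ octWeylHom.range := by
  intro μ hμ
  have root {g} (hg : cartanOct (F := F) e₁ e₂ u v g ≠ ⊥) (hg0 : g ≠ 0) : toAdd μ g ∈ octRoots :=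
    mem_octRoots_of_cartanOct_ne_bot (apply_ne_bot_of_mem_weylGroup hμ hg)
      ((toAdd μ).map_ne_zero_iff.mpr hg0)
  have hsum : octDeg 0 + octDeg 1 = -octDeg 2 := by decide
  obtain ⟨d, hd₀, hd₁⟩ := exists_octWeylHom_apply_eq
    (root (cartanOct_octDeg_ne_bot (hu 0)) (by decide))
    (root (cartanOct_octDeg_ne_bot (hu 1)) (by decide))
    (by rw [← map_add, hsum]; exact root (cartanOct_neg_octDeg_ne_bot (hv 2)) (by decide))
  exact ⟨d, toAdd.injective (AddAut.ext_int_prod hd₀ hd₁)⟩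

end CartanGrading

section WeylGroupOfCartanGrading

variable {F : Type*} [Field F] {C : Type*} [NonAssocRing C] [Module F C] [SMulCommClass F C C]
  [IsScalarTower F C C] {e₁ e₂ : C} {u v : Fin 3 → C}
  {b : Module.Basis (Fin 2 ⊕ Fin 3 ⊕ Fin 3) F C}

theorem ofAdd_mem_weylGroup_cartanOct (hb : ⇑b = octFamily e₁ e₂ u v)
    (h : GoodBasisRelations e₁ e₂ u v) {ψ : C ≃ₗ[F] C} {e₁' e₂' : C} {u' v' : Fin 3 → C}
    (hψ : ∀ j, ψ (octFamily e₁ e₂ u v j) = octFamily e₁' e₂' u' v' j)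
    (h' : GoodBasisRelations e₁' e₂' u' v') {μ : AddAut (ℤ × ℤ)}
    (hμ : ∀ g, cartanOct (F := F) e₁' e₂' u' v' g = cartanOct e₁ e₂ u v (μ g)) :
    ofAdd μ ∈ weylGroup (cartanOct (F := F) e₁ e₂ u v) := by
  obtain rfl : ψ e₁ = e₁' := hψ (.inl 0)
  obtain rfl : ψ e₂ = e₂' := hψ (.inl 1)
  obtain rfl : (fun i => ψ (u i)) = u' := funext fun i => hψ (.inr (.inl i))
  obtain rfl : (fun i => ψ (v i)) = v' := funext fun i => hψ (.inr (.inr i))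
  exact ⟨ψ, h.map_mul hb h', fun g => (map_cartanOct (ψ : C →ₗ[F] C) g).trans (hμ g)⟩

theorem ofAdd_octRotation_mem_weylGroup (hb : ⇑b = octFamily e₁ e₂ u v)
    (h : GoodBasisRelations e₁ e₂ u v) :
    ofAdd octRotation ∈ weylGroup (cartanOct (F := F) e₁ e₂ u v) := by
  let π := Equiv.sumCongr (Equiv.swap (0 : Fin 2) 1) ((Equiv.sumComm (Fin 3) (Fin 3)).trans
    (Equiv.sumCongr (Equiv.addRight 1) (Equiv.addRight 1)))
  refine ofAdd_mem_weylGroup_cartanOct hb h (ψ := b.equiv b π) (fun j => ?_) (h.shift 1).swap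
    fun g => (cartanOct_swap g).trans (cartanOct_comp_perm (Equiv.addRight 1) octShift_octDeg _)
  rw [← hb, b.equiv_apply, hb]
  rcases j with a | i | i
  · fin_cases a <;> rfl
  · rfl
  · rfl

theorem ofAdd_octReflection_mem_weylGroup (hb : ⇑b = octFamily e₁ e₂ u v)
    (h : GoodBasisRelations e₁ e₂ u v) :
    ofAdd octReflection ∈ weylGroup (cartanOct (F := F) e₁ e₂ u v) := by
  let π := Equiv.sumCongr (Equiv.refl (Fin 2))
    (Equiv.sumCongr (Equiv.neg (Fin 3)) (Equiv.neg (Fin 3)))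
  let s : Fin 2 ⊕ Fin 3 ⊕ Fin 3 → Fˣ := Sum.elim 1 (-1)
  refine ofAdd_mem_weylGroup_cartanOct hb h (ψ := b.equiv (b.unitsSMul s) π) (fun j => ?_)
    h.reflect fun g => (cartanOct_neg g).trans
      (cartanOct_comp_perm (Equiv.neg (Fin 3)) octReflection_octDeg g)
  rw [← hb, b.equiv_apply, b.unitsSMul_apply, hb]
  rcases j with a | i | i <;> simp [π, s, octFamily]

theorem weylGroup_cartanOct_eq_range (hb : ⇑b = octFamily e₁ e₂ u v)
    (h : GoodBasisRelations e₁ e₂ u v) :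
    weylGroup (cartanOct (F := F) e₁ e₂ u v) = octWeylHom.range := by
  refine le_antisymm (weylGroup_cartanOct_le_range (fun i => ?_) (fun i => ?_))
    (DihedralGroup.range_lift_le (ofAdd_octRotation_mem_weylGroup hb h)
      (ofAdd_octReflection_mem_weylGroup hb h))
  · simpa [hb, octFamily] using b.ne_zero (.inr (.inl i))
  · simpa [hb, octFamily] using b.ne_zero (.inr (.inr i))

end WeylGroupOfCartanGrading

theorem weyl_group_of_cartan_grading_on_octonions_general
    {F : Type*} [Field F]
    {C : Type*} [NonAssocRing C] [Module F C] [SMulCommClass F C C] [IsScalarTower F C C]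
    (e₁ e₂ : C) (u v : Fin 3 → C)
    (bC : Module.Basis (Fin 2 ⊕ Fin 3 ⊕ Fin 3) F C)
    (hb₁ : bC (Sum.inl 0) = e₁) (hb₂ : bC (Sum.inl 1) = e₂)
    (hbu : ∀ i, bC (Sum.inr (Sum.inl i)) = u i)
    (hbv : ∀ i, bC (Sum.inr (Sum.inr i)) = v i)
    (he₁ : e₁ * e₁ = e₁) (he₂ : e₂ * e₂ = e₂)
    (he₁₂ : e₁ * e₂ = 0) (he₂₁ : e₂ * e₁ = 0)
    (h1u : ∀ i, e₁ * u i = u i) (hu2 : ∀ i, u i * e₂ = u i)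
    (hu1 : ∀ i, u i * e₁ = 0) (h2u : ∀ i, e₂ * u i = 0)
    (h2v : ∀ i, e₂ * v i = v i) (hv1 : ∀ i, v i * e₁ = v i)
    (hv2 : ∀ i, v i * e₂ = 0) (h1v : ∀ i, e₁ * v i = 0)
    (huu : ∀ i, u i * u (i + 1) = v (i + 2)) (huu' : ∀ i, u (i + 1) * u i = -(v (i + 2)))
    (hvv : ∀ i, v i * v (i + 1) = u (i + 2)) (hvv' : ∀ i, v (i + 1) * v i = -(u (i + 2)))
    (huv : ∀ i, u i * v i = -e₁) (hvu : ∀ i, v i * u i = -e₂)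
    (huvz : ∀ i j, i ≠ j → u i * v j = 0) (hvuz : ∀ i j, i ≠ j → v i * u j = 0)
    (huuz : ∀ i, u i * u i = 0) (hvvz : ∀ i, v i * v i = 0) :
    ∃ W : Subgroup (Multiplicative (AddAut (ℤ × ℤ))),
      (∀ μ : AddAut (ℤ × ℤ), Multiplicative.ofAdd μ ∈ W ↔
        ∃ ψ : C ≃ₗ[F] C, (∀ x y : C, ψ (x * y) = ψ x * ψ y) ∧
          ∀ g : ℤ × ℤ, Submodule.map (ψ : C →ₗ[F] C) (cartanOct e₁ e₂ u v g)
            = cartanOct e₁ e₂ u v (μ g)) ∧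
      Nonempty (↥W ≃* DihedralGroup 6) := by
  have h : GoodBasisRelations e₁ e₂ u v := ⟨he₁, he₂, he₁₂, he₂₁, h1u, hu2, hu1, h2u, h2v, hv1,
    hv2, h1v, huu, huu', hvv, hvv', huv, hvu, huvz, hvuz, huuz, hvvz⟩
  have hb : ⇑bC = octFamily e₁ e₂ u v := by
    ext (a | i | i)
    · fin_cases a
      exacts [hb₁, hb₂]
    exacts [hbu i, hbv i]
  refine ⟨weylGroup (cartanOct e₁ e₂ u v), fun μ => Iff.rfl, ⟨?_⟩⟩
  rw [weylGroup_cartanOct_eq_range hb h]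
  exact (MonoidHom.ofInjective octWeylHom_injective).symm

/-- The Weyl group of the Cartan grading on the Cayley algebra, viewed as a subgroup of
`Aut(ℤ²)`, is isomorphic to the dihedral group of order 12 (the automorphism group of
the root system of type `G₂`). -/
theorem weyl_group_of_cartan_grading_on_octonions
    {F : Type*} [Field F] [IsAlgClosed F]
    {C : Type*} [NonAssocRing C] [Module F C] [SMulCommClass F C C] [IsScalarTower F C C]
    (e₁ e₂ : C) (u v : Fin 3 → C)
    (bC : Module.Basis (Fin 2 ⊕ Fin 3 ⊕ Fin 3) F C)
    (hb₁ : bC (Sum.inl 0) = e₁) (hb₂ : bC (Sum.inl 1) = e₂)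
    (hbu : ∀ i, bC (Sum.inr (Sum.inl i)) = u i)
    (hbv : ∀ i, bC (Sum.inr (Sum.inr i)) = v i)
    (he₁ : e₁ * e₁ = e₁) (he₂ : e₂ * e₂ = e₂)
    (he₁₂ : e₁ * e₂ = 0) (he₂₁ : e₂ * e₁ = 0)
    (h1u : ∀ i, e₁ * u i = u i) (hu2 : ∀ i, u i * e₂ = u i)
    (hu1 : ∀ i, u i * e₁ = 0) (h2u : ∀ i, e₂ * u i = 0)
    (h2v : ∀ i, e₂ * v i = v i) (hv1 : ∀ i, v i * e₁ = v i)
    (hv2 : ∀ i, v i * e₂ = 0) (h1v : ∀ i, e₁ * v i = 0)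
    (huu : ∀ i, u i * u (i + 1) = v (i + 2)) (huu' : ∀ i, u (i + 1) * u i = -(v (i + 2)))
    (hvv : ∀ i, v i * v (i + 1) = u (i + 2)) (hvv' : ∀ i, v (i + 1) * v i = -(u (i + 2)))
    (huv : ∀ i, u i * v i = -e₁) (hvu : ∀ i, v i * u i = -e₂)
    (huvz : ∀ i j, i ≠ j → u i * v j = 0) (hvuz : ∀ i j, i ≠ j → v i * u j = 0)
    (huuz : ∀ i, u i * u i = 0) (hvvz : ∀ i, v i * v i = 0) :
    ∃ W : Subgroup (Multiplicative (AddAut (ℤ × ℤ))),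
      (∀ μ : AddAut (ℤ × ℤ), Multiplicative.ofAdd μ ∈ W ↔
        ∃ ψ : C ≃ₗ[F] C, (∀ x y : C, ψ (x * y) = ψ x * ψ y) ∧
          ∀ g : ℤ × ℤ, Submodule.map (ψ : C →ₗ[F] C) (cartanOct e₁ e₂ u v g)
            = cartanOct e₁ e₂ u v (μ g)) ∧
      Nonempty (↥W ≃* DihedralGroup 6) :=
  weyl_group_of_cartan_grading_on_octonions_general e₁ e₂ u v bC hb₁ hb₂ hbu hbv he₁ he₂ he₁₂ he₂₁
    h1u hu2 hu1 h2u h2v hv1 hv2 h1v huu huu' hvv hvv' huv hvu huvz hvuz huuz hvvz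
end

section
/- Let C be the octonion algebra over an algebraically closed field with char ≠ 2, with the Z₂³-grading Γ₀ induced by the Cayley–Dickson doubling process. Then the stabilizer Stab(Γ₀) (automorphisms of C fixing each homogeneous component as a subspace) is isomorphic to Z₂³: each such automorphism multiplies each w_i by ±1, and any choice of signs occurs. -/
/-!
An automorphism `ψ` in the stabilizer fixes `1` and preserves the line `F wᵢ`; since `wᵢ² = 1`
it sends `wᵢ` to `±wᵢ`. The products of the `wᵢ` have nonzero norm, so they span the
one-dimensional homogeneous components, and `ψ` is determined by these three signs. Conversely a
character `χ` of the grading group gives the automorphism acting by `χ g` on the component of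
degree `g`, and the characters `g ↦ (-1) ^ (ε ⬝ᵥ g)` realise every choice of signs, injectively
in `ε` because `-1 ≠ 1`.
-/

open Module Submodule DirectSum

theorem map_one_of_surjective_of_map_mul {M : Type*} [MulOneClass M] {ψ : M → M}
    (hψ : Function.Surjective ψ) (hm : ∀ x y, ψ (x * y) = ψ x * ψ y) : ψ 1 = 1 := by
  obtain ⟨x, hx⟩ := hψ 1
  calc ψ 1 = ψ 1 * ψ x := by rw [hx, mul_one]
    _ = 1 := by rw [← hm, one_mul, hx]

namespace QuadraticMap

variable {F C : Type*} [Field F] [NonAssocRing C] [Module F C] (n : QuadraticForm F C)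

theorem map_one_of_map_mul [Nontrivial C] (hcomp : ∀ x y, n (x * y) = n x * n y)
    (hnondeg : ∀ x, (∀ y, polar n x y = 0) → x = 0) : n 1 = 1 := by
  have hidem : n 1 * (n 1 - 1) = 0 := by
    linear_combination -(by simpa using hcomp 1 1 : n 1 = n 1 * n 1)
  refine sub_eq_zero.mp ((mul_eq_zero.mp hidem).resolve_left fun h0 => one_ne_zero (hnondeg 1 ?_))
  have hzero : ∀ x, n x = 0 := fun x => by simpa [h0] using hcomp x 1
  simp [polar, hzero]

theorem map_ne_zero_of_mul_self_eq_one (hn1 : n 1 = 1) (hcomp : ∀ x y, n (x * y) = n x * n y)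
    {x : C} (hx : x * x = 1) : n x ≠ 0 := fun h0 => by
  simpa [hx, hn1, h0] using hcomp x x

end QuadraticMap

section SignOfInvolution

variable {F C : Type*} [Field F] [NonAssocRing C] [Nontrivial C] [Module F C]
  [SMulCommClass F C C] [IsScalarTower F C C]

theorem eq_or_eq_neg_of_map_mem_span_singleton {ψ : C →ₗ[F] C}
    (hm : ∀ x y, ψ (x * y) = ψ x * ψ y) (h1 : ψ 1 = 1) {x : C} (hx : x * x = 1)
    (hψx : ψ x ∈ F ∙ x) : ψ x = x ∨ ψ x = -x := by
  obtain ⟨d, hd⟩ := mem_span_singleton.mp hψx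
  have hd2 : (d * d) • (1 : C) = 1 := by
    rw [← hx, ← smul_mul_smul_comm, hd, ← hm, hx, h1]
  have hdd : d * d = 1 := smul_left_injective F one_ne_zero (hd2.trans (one_smul F 1).symm)
  rcases mul_self_eq_one_iff.mp hdd with rfl | rfl <;> simp [← hd]

end SignOfInvolution

section Grading

variable {F C ι : Type*} [Field F] [NonAssocRing C] [Module F C]

variable (F) in
def gradingStabilizer (ℬ : ι → Submodule F C) : Subgroup (C ≃ₗ[F] C) where
  carrier := {ψ | (∀ x y, ψ (x * y) = ψ x * ψ y) ∧ ∀ g, (ℬ g).map (ψ : C →ₗ[F] C) = ℬ g}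
  one_mem' := ⟨fun _ _ => rfl, fun g => map_id (ℬ g)⟩
  mul_mem' := by
    rintro a b ⟨ham, hap⟩ ⟨hbm, hbp⟩
    refine ⟨fun x y => ?_, fun g => ?_⟩
    · simp [ham, hbm]
    · rw [LinearEquiv.coe_toLinearMap_mul, Module.End.mul_eq_comp, Submodule.map_comp, hbp, hap]
  inv_mem' := by
    rintro a ⟨ham, hap⟩
    refine ⟨fun x y => a.injective ?_, fun g => (map_symm_eq_iff a).mpr (hap g)⟩
    simp [ham]

theorem mem_gradingStabilizer {ℬ : ι → Submodule F C} {ψ : C ≃ₗ[F] C} :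
    ψ ∈ gradingStabilizer F ℬ ↔
      (∀ x y, ψ (x * y) = ψ x * ψ y) ∧ ∀ g, (ℬ g).map (ψ : C →ₗ[F] C) = ℬ g :=
  Iff.rfl

end Grading

namespace DirectSum.IsInternal

variable {F C G : Type*} [Field F] [NonAssocRing C] [Module F C] [DecidableEq G]
  {ℬ : G → Submodule F C}

theorem linearMap_ext_of_forall_mem {M : Type*} [AddCommGroup M] [Module F M]
    (hℬ : IsInternal ℬ) {f f' : C →ₗ[F] M} (h : ∀ g, ∀ x ∈ ℬ g, f x = f' x) : f = f' :=
  (hℬ.collectedBasis fun g => Free.chooseBasis F (ℬ g)).ext fun σ =>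
    h _ _ (hℬ.collectedBasis_mem _ σ)

variable [AddGroup G]

noncomputable def scaling (hℬ : IsInternal ℬ) (χ : AddChar G F) : C ≃ₗ[F] C :=
  let b := hℬ.collectedBasis fun g => Free.chooseBasis F (ℬ g)
  b.equiv (b.isUnitSMul fun σ => χ.val_isUnit σ.1) (Equiv.refl _)

theorem scaling_apply_of_mem (hℬ : IsInternal ℬ) (χ : AddChar G F) {g : G} {x : C}
    (hx : x ∈ ℬ g) : hℬ.scaling χ x = χ g • x := by
  have hrestrict : (hℬ.scaling χ).toLinearMap ∘ₗ (ℬ g).subtype = χ g • (ℬ g).subtype :=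
    (Free.chooseBasis F (ℬ g)).ext fun i => by
      have hb : (hℬ.collectedBasis fun g => Free.chooseBasis F (ℬ g)) ⟨g, i⟩ =
          Free.chooseBasis F (ℬ g) i := by simp
      rw [LinearMap.comp_apply, LinearMap.smul_apply, subtype_apply, ← hb, LinearEquiv.coe_coe,
        scaling, Basis.equiv_apply, Basis.isUnitSMul_apply, Equiv.refl_apply]
  exact LinearMap.congr_fun hrestrict ⟨x, hx⟩

noncomputable def scalingHom (hℬ : IsInternal ℬ) : AddChar G F →* (C ≃ₗ[F] C) where
  toFun := hℬ.scaling
  map_one' := LinearEquiv.toLinearMap_injective <| hℬ.linearMap_ext_of_forall_mem fun g x hx => by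
    simp [scaling_apply_of_mem hℬ _ hx]
  map_mul' χ χ' := LinearEquiv.toLinearMap_injective <|
    hℬ.linearMap_ext_of_forall_mem fun g x hx => by
      change hℬ.scaling (χ * χ') x = hℬ.scaling χ (hℬ.scaling χ' x)
      rw [scaling_apply_of_mem hℬ _ hx, scaling_apply_of_mem hℬ _ hx,
        scaling_apply_of_mem hℬ _ ((ℬ g).smul_mem _ hx), AddChar.mul_apply, mul_smul]

theorem map_scaling (hℬ : IsInternal ℬ) (χ : AddChar G F) (g : G) :
    (ℬ g).map (hℬ.scaling χ : C →ₗ[F] C) = ℬ g := by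
  refine le_antisymm (map_le_iff_le_comap.mpr fun x hx => ?_) fun x hx => ?_
  · simpa [scaling_apply_of_mem hℬ χ hx] using (ℬ g).smul_mem (χ g) hx
  · refine ⟨(χ g)⁻¹ • x, (ℬ g).smul_mem _ hx, ?_⟩
    rw [LinearEquiv.coe_coe, scaling_apply_of_mem hℬ χ ((ℬ g).smul_mem _ hx), smul_smul,
      mul_inv_cancel₀ (χ.val_isUnit g).ne_zero, one_smul]

variable [SMulCommClass F C C] [IsScalarTower F C C]

theorem scaling_map_mul (hℬ : IsInternal ℬ)
    (hmul : ∀ g h (x y : C), x ∈ ℬ g → y ∈ ℬ h → x * y ∈ ℬ (g + h)) (χ : AddChar G F) (x y : C) :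
    hℬ.scaling χ (x * y) = hℬ.scaling χ x * hℬ.scaling χ y := by
  let b := hℬ.collectedBasis fun g => Free.chooseBasis F (ℬ g)
  have hb : ∀ σ, b σ ∈ ℬ σ.1 := hℬ.collectedBasis_mem _
  have hbilin : (LinearMap.mul F C).compr₂ (hℬ.scaling χ).toLinearMap =
      (LinearMap.mul F C).compl₁₂ (hℬ.scaling χ).toLinearMap (hℬ.scaling χ).toLinearMap :=
    b.ext fun σ => b.ext fun τ => by
      simp only [LinearMap.compr₂_apply, LinearMap.compl₁₂_apply, LinearMap.mul_apply',
        LinearEquiv.coe_coe]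
      rw [scaling_apply_of_mem hℬ χ (hmul _ _ _ _ (hb σ) (hb τ)), scaling_apply_of_mem hℬ χ (hb σ),
        scaling_apply_of_mem hℬ χ (hb τ), AddChar.map_add_eq_mul, smul_mul_smul_comm]
  simpa using LinearMap.congr_fun₂ hbilin x y

theorem scaling_mem_gradingStabilizer (hℬ : IsInternal ℬ)
    (hmul : ∀ g h (x y : C), x ∈ ℬ g → y ∈ ℬ h → x * y ∈ ℬ (g + h)) (χ : AddChar G F) :
    hℬ.scaling χ ∈ gradingStabilizer F ℬ :=
  ⟨hℬ.scaling_map_mul hmul χ, hℬ.map_scaling χ⟩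

end DirectSum.IsInternal

section SignCharacter

variable {ι : Type*} [Fintype ι] (F : Type*) [CommRing F]

def signChar (ε : ι → ZMod 2) : AddChar (ι → ZMod 2) F :=
  (AddChar.zmodChar 2 (neg_one_sq : (-1 : F) ^ 2 = 1)).compAddMonoidHom
    (AddMonoidHom.mk' (ε ⬝ᵥ ·) (dotProduct_add ε))

variable {F}

theorem signChar_apply_single [DecidableEq ι] (ε : ι → ZMod 2) (i : ι) :
    signChar F ε (Pi.single i 1) = (-1) ^ (ε i).val := by
  simp [signChar, AddChar.zmodChar_apply]

variable (F)

def signCharHom : Multiplicative (ι → ZMod 2) →* AddChar (ι → ZMod 2) F where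
  toFun ε := signChar F ε.toAdd
  map_one' := by ext g; simp [signChar]
  map_mul' ε ε' := by
    ext g
    simp only [signChar, toAdd_mul, AddChar.compAddMonoidHom_apply, AddMonoidHom.mk'_apply,
      add_dotProduct, AddChar.map_add_eq_mul, AddChar.mul_apply]

end SignCharacter

theorem neg_one_pow_val_eq_one_iff {F : Type*} [CommRing F] (h2 : (2 : F) ≠ 0) (a : ZMod 2) :
    (-1 : F) ^ a.val = 1 ↔ a = 0 := by
  rcases (by decide : ∀ b : ZMod 2, b = 0 ∨ b = 1) a with rfl | rfl
  · simp
  · refine iff_of_false (fun h => h2 ?_) one_ne_zero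
    rw [ZMod.val_one, pow_one] at h
    linear_combination -h

section SignScaling

variable {F C ι : Type*} [Field F] [NonAssocRing C] [Module F C] [SMulCommClass F C C]
  [IsScalarTower F C C] [Fintype ι] [DecidableEq ι] {ℬ : (ι → ZMod 2) → Submodule F C}

noncomputable def signScalingHom (hℬ : IsInternal ℬ)
    (hmul : ∀ g h (x y : C), x ∈ ℬ g → y ∈ ℬ h → x * y ∈ ℬ (g + h)) :
    Multiplicative (ι → ZMod 2) →* gradingStabilizer F ℬ :=
  (hℬ.scalingHom.comp (signCharHom F)).codRestrict _ fun _ =>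
    hℬ.scaling_mem_gradingStabilizer hmul _

theorem signScalingHom_apply_of_mem_single (hℬ : IsInternal ℬ)
    (hmul : ∀ g h (x y : C), x ∈ ℬ g → y ∈ ℬ h → x * y ∈ ℬ (g + h))
    (ε : Multiplicative (ι → ZMod 2)) {i : ι} {x : C} (hx : x ∈ ℬ (Pi.single i 1)) :
    (signScalingHom hℬ hmul ε : C ≃ₗ[F] C) x = (-1 : F) ^ (ε.toAdd i).val • x := by
  rw [← signChar_apply_single]
  exact hℬ.scaling_apply_of_mem _ hx

theorem signScalingHom_injective (hℬ : IsInternal ℬ)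
    (hmul : ∀ g h (x y : C), x ∈ ℬ g → y ∈ ℬ h → x * y ∈ ℬ (g + h)) (h2 : (2 : F) ≠ 0)
    (hne : ∀ i, ∃ x ∈ ℬ (Pi.single i 1), x ≠ 0) : Function.Injective (signScalingHom hℬ hmul) := by
  refine (injective_iff_map_eq_one _).mpr fun ε hε => toAdd_eq_zero.mp (funext fun i => ?_)
  obtain ⟨x, hx, hx0⟩ := hne i
  have hfix : (-1 : F) ^ (ε.toAdd i).val • x = (1 : F) • x := by
    rw [← signScalingHom_apply_of_mem_single hℬ hmul ε hx, hε, one_smul]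
    rfl
  exact (neg_one_pow_val_eq_one_iff h2 _).mp (smul_left_injective F hx0 hfix)

end SignScaling

theorem map_eq_or_eq_neg_of_mem_gradingStabilizer {F C ι : Type*} [Field F] [NonAssocRing C]
    [Nontrivial C] [Module F C] [SMulCommClass F C C] [IsScalarTower F C C]
    {ℬ : ι → Submodule F C} {ψ : C ≃ₗ[F] C} (hψ : ψ ∈ gradingStabilizer F ℬ) {g : ι} {x : C}
    (hg : ℬ g = F ∙ x) (hx : x * x = 1) : ψ x = x ∨ ψ x = -x := by
  refine eq_or_eq_neg_of_map_mem_span_singleton (ψ := ψ.toLinearMap) hψ.1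
    (map_one_of_surjective_of_map_mul ψ.surjective hψ.1) hx ?_
  rw [← hg, ← hψ.2 g]
  exact mem_map_of_mem (hg ▸ mem_span_singleton_self x)

section CayleyDickson

variable {C : Type*} [NonAssocRing C]

def cdMonomial (w : Fin 3 → C) (g : Fin 3 → ZMod 2) : C :=
  ((if g 0 = 1 then w 0 else 1) * (if g 1 = 1 then w 1 else 1)) * (if g 2 = 1 then w 2 else 1)

theorem cdMonomial_mem {F : Type*} [Field F] [Module F C] {ℬ : (Fin 3 → ZMod 2) → Submodule F C}
    (hmul : ∀ g h (x y : C), x ∈ ℬ g → y ∈ ℬ h → x * y ∈ ℬ (g + h)) (hone : (1 : C) ∈ ℬ 0)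
    {w : Fin 3 → C} (hw : ∀ i, w i ∈ ℬ (Pi.single i 1)) (g : Fin 3 → ZMod 2) :
    cdMonomial w g ∈ ℬ g := by
  have hfactor : ∀ i, (if g i = 1 then w i else 1) ∈ ℬ (Pi.single i (g i)) := fun i => by
    rcases (by decide : ∀ b : ZMod 2, b = 0 ∨ b = 1) (g i) with h | h <;> simp [h, hone, hw]
  have hg := Finset.univ_sum_single g
  rw [Fin.sum_univ_three] at hg
  have hprod := hmul _ _ _ _ (hmul _ _ _ _ (hfactor 0) (hfactor 1)) (hfactor 2)
  rwa [hg] at hprod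

theorem QuadraticMap.map_cdMonomial_ne_zero {F : Type*} [Field F] [Module F C]
    (n : QuadraticForm F C) (hn1 : n 1 = 1) (hcomp : ∀ x y, n (x * y) = n x * n y)
    {w : Fin 3 → C} (hwsq : ∀ i, w i * w i = 1) (g : Fin 3 → ZMod 2) :
    n (cdMonomial w g) ≠ 0 := by
  have hfactor : ∀ i, n (if g i = 1 then w i else 1) ≠ 0 := fun i => by
    split_ifs
    · exact n.map_ne_zero_of_mul_self_eq_one hn1 hcomp (hwsq i)
    · exact hn1 ▸ one_ne_zero
  rw [cdMonomial, hcomp, hcomp]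
  exact mul_ne_zero (mul_ne_zero (hfactor 0) (hfactor 1)) (hfactor 2)

theorem map_cdMonomial_eq_of_map_eq {f f' : C → C} (hf : ∀ x y, f (x * y) = f x * f y)
    (hf' : ∀ x y, f' (x * y) = f' x * f' y) (h1 : f 1 = f' 1) {w : Fin 3 → C}
    (hw : ∀ i, f (w i) = f' (w i)) (g : Fin 3 → ZMod 2) :
    f (cdMonomial w g) = f' (cdMonomial w g) := by
  have hfactor : ∀ i, f (if g i = 1 then w i else 1) = f' (if g i = 1 then w i else 1) :=
    fun i => by split_ifs <;> simp only [hw, h1]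
  simp only [cdMonomial, hf, hf', hfactor]

variable {F : Type*} [Field F] [Module F C] {ℬ : (Fin 3 → ZMod 2) → Submodule F C}
  {w : Fin 3 → C}

theorem eq_of_map_eq_of_mem_gradingStabilizer (hℬ : IsInternal ℬ)
    (hspan : ∀ g, ℬ g = F ∙ cdMonomial w g) {ψ φ : C ≃ₗ[F] C} (hψ : ψ ∈ gradingStabilizer F ℬ)
    (hφ : φ ∈ gradingStabilizer F ℬ) (h : ∀ i, ψ (w i) = φ (w i)) : ψ = φ := by
  have h1 : ψ 1 = φ 1 := by
    rw [map_one_of_surjective_of_map_mul ψ.surjective hψ.1,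
      map_one_of_surjective_of_map_mul φ.surjective hφ.1]
  refine LinearEquiv.toLinearMap_injective (hℬ.linearMap_ext_of_forall_mem fun g x hx => ?_)
  obtain ⟨t, rfl⟩ := mem_span_singleton.mp (hspan g ▸ hx)
  simp [map_cdMonomial_eq_of_map_eq hψ.1 hφ.1 h1 h g]

theorem signScalingHom_surjective [Nontrivial C] [SMulCommClass F C C] [IsScalarTower F C C]
    (hℬ : IsInternal ℬ) (hmul : ∀ g h (x y : C), x ∈ ℬ g → y ∈ ℬ h → x * y ∈ ℬ (g + h))
    (hspan : ∀ g, ℬ g = F ∙ cdMonomial w g) (hspan_w : ∀ i, ℬ (Pi.single i 1) = F ∙ w i)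
    (hwsq : ∀ i, w i * w i = 1) : Function.Surjective (signScalingHom hℬ hmul) := by
  classical
  rintro ⟨ψ, hψ⟩
  refine ⟨Multiplicative.ofAdd fun i => if ψ (w i) = w i then 0 else 1,
    Subtype.ext (eq_of_map_eq_of_mem_gradingStabilizer hℬ hspan (Subtype.prop _) hψ fun i => ?_)⟩
  rw [signScalingHom_apply_of_mem_single hℬ hmul _ (hspan_w i ▸ mem_span_singleton_self (w i))]
  by_cases hfix : ψ (w i) = w i
  · simp [hfix]
  · rw [toAdd_ofAdd, if_neg hfix,
      (map_eq_or_eq_neg_of_mem_gradingStabilizer hψ (hspan_w i) (hwsq i)).resolve_left hfix,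
      ZMod.val_one, pow_one, neg_one_smul]

end CayleyDickson

theorem stabilizer_of_CD_grading_on_octonions_general
    {F : Type*} [Field F] (h2 : (2 : F) ≠ 0)
    {C : Type*} [NonAssocRing C] [Module F C] [SMulCommClass F C C] [IsScalarTower F C C]
    (n : QuadraticForm F C)
    (hcomp : ∀ x y : C, n (x * y) = n x * n y)
    (hnondeg : ∀ x : C, (∀ y : C, QuadraticMap.polar ⇑n x y = 0) → x = 0)
    (ℬ : (Fin 3 → ZMod 2) → Submodule F C)
    (hinternal : DirectSum.IsInternal ℬ)
    (hmul : ∀ (g h : Fin 3 → ZMod 2) (x y : C), x ∈ ℬ g → y ∈ ℬ h → x * y ∈ ℬ (g + h))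
    (hone : (1 : C) ∈ ℬ 0)
    (w : Fin 3 → C)
    (hw : ∀ i, w i ∈ ℬ (Pi.single i 1))
    (hwsq : ∀ i, w i * w i = 1)
    (hdim1 : ∀ g, Module.finrank F ↥(ℬ g) = 1) :
    ∃ S : Subgroup (C ≃ₗ[F] C),
      (∀ ψ : C ≃ₗ[F] C, ψ ∈ S ↔
        ((∀ x y : C, ψ (x * y) = ψ x * ψ y) ∧
          ∀ g, Submodule.map (ψ : C →ₗ[F] C) (ℬ g) = ℬ g)) ∧
      (∀ ψ ∈ S, ∀ i, ψ (w i) = w i ∨ ψ (w i) = -(w i)) ∧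
      (∀ s : Fin 3 → Bool, ∃ ψ ∈ S, ∀ i, ψ (w i) = if s i then -(w i) else w i) ∧
      Nonempty (↥S ≃* Multiplicative (Fin 3 → ZMod 2)) := by
  have : Nontrivial (ℬ 0) := Module.nontrivial_of_finrank_eq_succ (hdim1 0)
  have : Nontrivial C := (ℬ 0).subtype_injective.nontrivial
  have hn1 : n 1 = 1 := n.map_one_of_map_mul hcomp hnondeg
  have hw0 : ∀ i, w i ≠ 0 := fun i h0 => by simpa [h0] using hwsq i
  have hspan : ∀ g, ℬ g = F ∙ cdMonomial w g := fun g =>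
    eq_span_singleton_of_mem_of_finrank_eq_one (hdim1 g) (cdMonomial_mem hmul hone hw g)
      fun h0 => n.map_cdMonomial_ne_zero hn1 hcomp hwsq g (h0 ▸ n.map_zero)
  have hspan_w : ∀ i, ℬ (Pi.single i 1) = F ∙ w i := fun i =>
    eq_span_singleton_of_mem_of_finrank_eq_one (hdim1 _) (hw i) (hw0 i)
  let Θ := signScalingHom hinternal hmul
  have hΘ : Function.Bijective Θ :=
    ⟨signScalingHom_injective hinternal hmul h2 fun i => ⟨w i, hw i, hw0 i⟩,
      signScalingHom_surjective hinternal hmul hspan hspan_w hwsq⟩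
  refine ⟨gradingStabilizer F ℬ, fun ψ => mem_gradingStabilizer,
    fun ψ hψ i => map_eq_or_eq_neg_of_mem_gradingStabilizer hψ (hspan_w i) (hwsq i),
    fun s => ⟨Θ (.ofAdd fun i => if s i then (1 : ZMod 2) else 0), (Θ _).2, fun i => ?_⟩,
    ⟨(MulEquiv.ofBijective Θ hΘ).symm⟩⟩
  rw [signScalingHom_apply_of_mem_single hinternal hmul _ (hw i), toAdd_ofAdd]
  cases s i <;> simp [ZMod.val_one]

/-- The stabilizer of the `ℤ₂³`-grading on the octonion algebra induced by the
Cayley–Dickson doubling process is isomorphic to `ℤ₂³`: every automorphism fixing all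
homogeneous components multiplies each `wᵢ` by `±1`, and every choice of signs occurs. -/
theorem stabilizer_of_CD_grading_on_octonions
    {F : Type*} [Field F] [IsAlgClosed F] (h2 : (2 : F) ≠ 0)
    {C : Type*} [NonAssocRing C] [Module F C] [SMulCommClass F C C] [IsScalarTower F C C]
    (n : QuadraticForm F C)
    (hdim : Module.finrank F C = 8)
    (hcomp : ∀ x y : C, n (x * y) = n x * n y)
    (hnondeg : ∀ x : C, (∀ y : C, QuadraticMap.polar ⇑n x y = 0) → x = 0)
    (ℬ : (Fin 3 → ZMod 2) → Submodule F C)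
    (hinternal : DirectSum.IsInternal ℬ)
    (hmul : ∀ (g h : Fin 3 → ZMod 2) (x y : C), x ∈ ℬ g → y ∈ ℬ h → x * y ∈ ℬ (g + h))
    (hone : (1 : C) ∈ ℬ 0)
    (w : Fin 3 → C)
    (hw : ∀ i, w i ∈ ℬ (Pi.single i 1))
    (hwsq : ∀ i, w i * w i = 1)
    (hdim1 : ∀ g, Module.finrank F ↥(ℬ g) = 1) :
    ∃ S : Subgroup (C ≃ₗ[F] C),
      (∀ ψ : C ≃ₗ[F] C, ψ ∈ S ↔
        ((∀ x y : C, ψ (x * y) = ψ x * ψ y) ∧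
          ∀ g, Submodule.map (ψ : C →ₗ[F] C) (ℬ g) = ℬ g)) ∧
      (∀ ψ ∈ S, ∀ i, ψ (w i) = w i ∨ ψ (w i) = -(w i)) ∧
      (∀ s : Fin 3 → Bool, ∃ ψ ∈ S, ∀ i, ψ (w i) = if s i then -(w i) else w i) ∧
      Nonempty (↥S ≃* Multiplicative (Fin 3 → ZMod 2)) :=
  stabilizer_of_CD_grading_on_octonions_general h2 n hcomp hnondeg ℬ hinternal hmul hone w hw hwsq
    hdim1
end
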